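/- arXiv:2004.02165 — 7 statements merged into one kernel-verified Lean document; each statement's English description precedes it below -/
import Mathlib

section
/- Let a be a symmetric n×n real matrix, b an n×k real matrix, c a symmetric k×k real matrix, and define the quadratic form Q(q,ξ) := qᵀaq + 2qᵀbξ + ξᵀcξ on ℝ^n×ℝ^k. Assume that for every q ∈ ℝ^n there is a unique ξ ∈ ℝ^k with bᵀq + cξ = 0, and that for this ξ one also has aq + bξ = 0. Then c is invertible and, for all (q,ξ) ∈ ℝ^n×ℝ^k, Q(q, ξ − c⁻¹bᵀq) = ξᵀcξ. -/
open Matrix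

theorem stmt1 (n k : ℕ)
    (a : Matrix (Fin n) (Fin n) ℝ) (b : Matrix (Fin n) (Fin k) ℝ)
    (c : Matrix (Fin k) (Fin k) ℝ)
    (ha : a.IsSymm) (hc : c.IsSymm)
    (Q : (Fin n → ℝ) → (Fin k → ℝ) → ℝ)
    (hQ : ∀ q ξ, Q q ξ = q ⬝ᵥ a.mulVec q + 2 * (q ⬝ᵥ b.mulVec ξ) + ξ ⬝ᵥ c.mulVec ξ)
    (huniq : ∀ q : Fin n → ℝ, ∃! ξ : Fin k → ℝ, bᵀ.mulVec q + c.mulVec ξ = 0)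
    (hzero : ∀ (q : Fin n → ℝ) (ξ : Fin k → ℝ), bᵀ.mulVec q + c.mulVec ξ = 0 →
      a.mulVec q + b.mulVec ξ = 0) :
    IsUnit c ∧
    ∀ (q : Fin n → ℝ) (ξ : Fin k → ℝ),
      Q q (ξ - c⁻¹.mulVec (bᵀ.mulVec q)) = ξ ⬝ᵥ c.mulVec ξ := by
  have hcu : IsUnit c := by
    rw [← Matrix.mulVec_injective_iff_isUnit]
    intro x y hxy
    obtain ⟨ξ, hξ, huq⟩ := huniq 0
    have hd : c.mulVec (x - y) = 0 := by
      rw [Matrix.mulVec_sub, hxy, sub_self]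
    have h1 := huq (x - y) (by simp [hd])
    have h2 := huq 0 (by simp)
    have := h1.trans h2.symm
    exact sub_eq_zero.mp this
  refine ⟨hcu, fun q ξ => ?_⟩
  set p := c⁻¹.mulVec (bᵀ.mulVec q) with hp
  have hcp : c.mulVec p = bᵀ.mulVec q := by
    rw [hp, Matrix.mulVec_mulVec, Matrix.mul_nonsing_inv c ((Matrix.isUnit_iff_isUnit_det c).mp hcu), Matrix.one_mulVec]
  have hcrit : bᵀ.mulVec q + c.mulVec (-p) = 0 := by
    rw [Matrix.mulVec_neg, hcp]; ring_nf
  have haq : a.mulVec q = b.mulVec p := by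
    have := hzero q (-p) hcrit
    rw [Matrix.mulVec_neg, ← sub_eq_add_neg] at this
    exact sub_eq_zero.mp this
  rw [hQ]
  have e1 : q ⬝ᵥ a.mulVec q = q ⬝ᵥ b.mulVec p := by rw [haq]
  have e2 : q ⬝ᵥ b.mulVec (ξ - p) = q ⬝ᵥ b.mulVec ξ - q ⬝ᵥ b.mulVec p := by
    rw [Matrix.mulVec_sub, dotProduct_sub]
  have e3 : (ξ - p) ⬝ᵥ c.mulVec (ξ - p)
      = ξ ⬝ᵥ c.mulVec ξ - ξ ⬝ᵥ c.mulVec p - p ⬝ᵥ c.mulVec ξ + p ⬝ᵥ c.mulVec p := by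
    simp only [Matrix.mulVec_sub, dotProduct_sub, sub_dotProduct]; ring
  have e4 : ξ ⬝ᵥ c.mulVec p = q ⬝ᵥ b.mulVec ξ := by
    rw [hcp, dotProduct_comm, Matrix.mulVec_transpose, ← Matrix.dotProduct_mulVec]
  have e5 : p ⬝ᵥ c.mulVec ξ = q ⬝ᵥ b.mulVec ξ := by
    rw [Matrix.dotProduct_mulVec, ← Matrix.mulVec_transpose, hc.eq, hcp,
      Matrix.mulVec_transpose, ← Matrix.dotProduct_mulVec]
  have e6 : p ⬝ᵥ c.mulVec p = q ⬝ᵥ b.mulVec p := by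
    rw [hcp, dotProduct_comm, Matrix.mulVec_transpose, ← Matrix.dotProduct_mulVec]
  rw [e1, e2, e3, e4, e5, e6]; ring
end

section
/- Let σ = (σ_1,…,σ_n) be a tuple of bijections of ℂ^d with elementary generating functions f_1,…,f_n. For v ∈ (ℂ^d)^n set w_j := (v_j+v_{j+1})/2 (with v_{n+1} := v_1) and z_j := ψ_{σ_j}⁻¹(w_j). Then for every k ∈ {1,…,n}, the gradient of F_σ with respect to the k-th variable satisfies ∇_{v_k}F_σ(v) = i·(z_k − σ_{k−1}(z_{k−1})), where indices are understood cyclically (σ_0 := σ_n, z_0 := z_n). -/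
noncomputable section
open scoped RealInnerProductSpace
open Complex Function

abbrev Cd (d : ℕ) : Type := EuclideanSpace ℂ (Fin d)

/-- ψ_σ(z) := (z + σ(z))/2. -/
def psiMap {d : ℕ} (σ : Cd d → Cd d) : Cd d → Cd d := fun z => (2⁻¹ : ℝ) • (z + σ z)

/-- `f` is an elementary generating function of `σ`. -/
def IsElemGF {d : ℕ} (σ : Cd d → Cd d) (f : Cd d → ℝ) : Prop :=
  Function.Bijective (psiMap σ) ∧
  ∀ z : Cd d, gradient f (psiMap σ z) = Complex.I • (z - σ z)

/-- The generating-function form F_σ of a tuple, via its elementary generating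
functions f_k; indices are cyclic (`finRotate` is the cyclic successor). -/
def Ftuple {d n : ℕ} (f : Fin n → (Cd d → ℝ)) (v : Fin n → Cd d) : ℝ :=
  ∑ k, (f k ((2⁻¹ : ℝ) • (v k + v (finRotate n k)))
    + (2⁻¹ : ℝ) * ⟪v k, Complex.I • v (finRotate n k)⟫)

/-- partial gradient of F with respect to the k-th variable. -/
def pgrad {d n : ℕ} (F : (Fin n → Cd d) → ℝ) (k : Fin n) (v : Fin n → Cd d) : Cd d :=
  gradient (fun u => F (Function.update v k u)) (v k)

lemma inner_I_flip {d : ℕ} (p q : Cd d) : ⟪p, Complex.I • q⟫ = -⟪Complex.I • p, q⟫ := by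
  simp only [PiLp.inner_apply, PiLp.smul_apply, smul_eq_mul, Complex.inner,
    ← Finset.sum_neg_distrib]
  congr 1; ext j
  simp [Complex.mul_re, Complex.mul_im]
  ring

lemma helper {d : ℕ} (f : Cd d → ℝ) (hd : Differentiable ℝ f) (c₁ c₂ : ℝ) (a b x a' b' : Cd d)
    (ha : a' = a + c₁ • (x - a)) (hb : b' = b + c₂ • (x - b)) :
    HasGradientAt
      (fun u : Cd d => f ((2⁻¹ : ℝ) • ((a + c₁ • (u - a)) + (b + c₂ • (u - b))))
        + (2⁻¹ : ℝ) * ⟪a + c₁ • (u - a), Complex.I • (b + c₂ • (u - b))⟫)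
      ((2⁻¹ * (c₁ + c₂)) • gradient f ((2⁻¹ : ℝ) • (a' + b'))
        + ((2⁻¹ * c₁) • (Complex.I • b') - (2⁻¹ * c₂) • (Complex.I • a'))) x := by
  set m : Cd d := (2⁻¹ : ℝ) • (a' + b') with hm
  have hA : HasFDerivAt (fun u : Cd d => a + c₁ • (u - a))
      (c₁ • ContinuousLinearMap.id ℝ (Cd d)) x :=
    (((hasFDerivAt_id x).sub_const a).const_smul c₁).const_add a
  have hB : HasFDerivAt (fun u : Cd d => b + c₂ • (u - b))
      (c₂ • ContinuousLinearMap.id ℝ (Cd d)) x :=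
    (((hasFDerivAt_id x).sub_const b).const_smul c₂).const_add b
  have hφ : HasFDerivAt (fun u : Cd d => (2⁻¹ : ℝ) • ((a + c₁ • (u - a)) + (b + c₂ • (u - b))))
      ((2⁻¹ : ℝ) • (c₁ • ContinuousLinearMap.id ℝ (Cd d) + c₂ • ContinuousLinearMap.id ℝ (Cd d))) x :=
    (hA.add hB).const_smul (2⁻¹ : ℝ)
  have hfm : HasFDerivAt f (InnerProductSpace.toDual ℝ (Cd d) (gradient f m)) m :=
    ((hd m).hasGradientAt).hasFDerivAt
  have hφx : (2⁻¹ : ℝ) • ((a + c₁ • (x - a)) + (b + c₂ • (x - b))) = m := by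
    rw [hm, ha, hb]
  have h1 : HasFDerivAt (fun u : Cd d => f ((2⁻¹ : ℝ) • ((a + c₁ • (u - a)) + (b + c₂ • (u - b)))))
      ((InnerProductSpace.toDual ℝ (Cd d) (gradient f m)).comp
        ((2⁻¹ : ℝ) • (c₁ • ContinuousLinearMap.id ℝ (Cd d) + c₂ • ContinuousLinearMap.id ℝ (Cd d)))) x :=
    HasFDerivAt.comp x (hφx ▸ hfm) hφ
  have hIB : HasFDerivAt (fun u : Cd d => Complex.I • (b + c₂ • (u - b)))
      (Complex.I • (c₂ • ContinuousLinearMap.id ℝ (Cd d))) x := hB.const_smul Complex.I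
  have h2 : HasFDerivAt (fun u : Cd d => ⟪a + c₁ • (u - a), Complex.I • (b + c₂ • (u - b))⟫)
      ((fderivInnerCLM ℝ (a', Complex.I • b')).comp
        ((c₁ • ContinuousLinearMap.id ℝ (Cd d)).prod (Complex.I • (c₂ • ContinuousLinearMap.id ℝ (Cd d))))) x := by
    have := hA.inner ℝ hIB
    rwa [← ha, ← hb] at this
  have h2' := h2.const_mul (2⁻¹ : ℝ)
  have total := h1.add h2'
  rw [hasGradientAt_iff_hasFDerivAt]
  refine total.congr_fderiv ?_
  ext h
  simp only [ContinuousLinearMap.add_apply, ContinuousLinearMap.coe_comp', Function.comp_apply,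
    ContinuousLinearMap.smul_apply, ContinuousLinearMap.add_apply, ContinuousLinearMap.id_apply,
    ContinuousLinearMap.prod_apply, fderivInnerCLM_apply, InnerProductSpace.toDual_apply_apply,
    smul_eq_mul]
  rw [inner_I_flip a' (c₂ • h)]
  simp only [inner_add_left, inner_add_right, inner_sub_left, real_inner_smul_left,
    real_inner_smul_right, inner_neg_left]
  rw [real_inner_comm h (Complex.I • b')]
  ring

theorem stmt3 (d n : ℕ) (hn : 1 ≤ n)
    (σ : Fin n → (Cd d → Cd d)) (f : Fin n → (Cd d → ℝ))
    (hbij : ∀ k, Function.Bijective (σ k))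
    (hsm : ∀ k, ContDiff ℝ (⊤ : ℕ∞) (f k))
    (hgf : ∀ k, IsElemGF (σ k) (f k))
    (v : Fin n → Cd d)
    (w : Fin n → Cd d) (hw : ∀ k, w k = (2⁻¹ : ℝ) • (v k + v (finRotate n k)))
    (z : Fin n → Cd d) (hz : ∀ k, z k = Function.invFun (psiMap (σ k)) (w k)) :
    ∀ k : Fin n, pgrad (Ftuple f) k v
      = Complex.I •
        (z k - σ ((finRotate n).symm k) (z ((finRotate n).symm k))) := by
  intro k
  set r := finRotate n with hr
  set k' := r.symm k with hk'
  -- basic facts about z and w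
  have hsur : ∀ j, psiMap (σ j) (z j) = w j := fun j => by
    rw [hz j]; exact Function.invFun_eq ((hgf j).1.surjective (w j))
  have hgrad : ∀ j, gradient (f j) (w j) = Complex.I • (z j - σ j (z j)) := fun j => by
    rw [← hsur j]; exact (hgf j).2 (z j)
  have hzsum : ∀ j, z j + σ j (z j) = v j + v (r j) := fun j => by
    have h := hsur j
    rw [hw j] at h
    exact smul_right_injective (Cd d) (by norm_num : (2⁻¹ : ℝ) ≠ 0) h
  -- the coefficients
  set c₁ : Fin n → ℝ := fun j => if j = k then 1 else 0 with hc₁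
  set c₂ : Fin n → ℝ := fun j => if r j = k then 1 else 0 with hc₂
  -- the per-summand gradients
  set g : Fin n → Cd d := fun j =>
    (2⁻¹ * (c₁ j + c₂ j)) • gradient (f j) (w j)
      + ((2⁻¹ * c₁ j) • (Complex.I • v (r j)) - (2⁻¹ * c₂ j) • (Complex.I • v j)) with hg
  have hasG : ∀ j, HasGradientAt
      (fun u : Cd d => f j ((2⁻¹ : ℝ) • (Function.update v k u j + Function.update v k u (r j)))
        + (2⁻¹ : ℝ) * ⟪Function.update v k u j, Complex.I • Function.update v k u (r j)⟫)
      (g j) (v k) := by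
    intro j
    have e₁ : ∀ u : Cd d, Function.update v k u j = v j + c₁ j • (u - v j) := by
      intro u
      by_cases hj : j = k <;> simp [Function.update_apply, hj, hc₁]
    have e₂ : ∀ u : Cd d, Function.update v k u (r j) = v (r j) + c₂ j • (u - v (r j)) := by
      intro u
      by_cases hj : r j = k <;> simp [Function.update_apply, hj, hc₂]
    have ha' : v j = v j + c₁ j • (v k - v j) := by
      by_cases hj : j = k <;> simp [hj, hc₁]
    have hb' : v (r j) = v (r j) + c₂ j • (v k - v (r j)) := by
      by_cases hj : r j = k <;> simp [hj, hc₂]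
    have H := helper (f j) ((hsm j).differentiable (by simp)) (c₁ j) (c₂ j)
      (v j) (v (r j)) (v k) (v j) (v (r j)) ha' hb'
    rw [← hw j] at H
    have hfun : (fun u : Cd d => f j ((2⁻¹ : ℝ) • ((v j + c₁ j • (u - v j)) + (v (r j) + c₂ j • (u - v (r j)))))
        + (2⁻¹ : ℝ) * ⟪v j + c₁ j • (u - v j), Complex.I • (v (r j) + c₂ j • (u - v (r j)))⟫)
        = (fun u : Cd d => f j ((2⁻¹ : ℝ) • (Function.update v k u j + Function.update v k u (r j)))
        + (2⁻¹ : ℝ) * ⟪Function.update v k u j, Complex.I • Function.update v k u (r j)⟫) := by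
      funext u; rw [e₁ u, e₂ u]
    rw [hfun] at H
    exact H
  -- sum
  have hGsum : HasGradientAt (fun u => Ftuple f (Function.update v k u)) (∑ j, g j) (v k) := by
    rw [hasGradientAt_iff_hasFDerivAt, map_sum]
    exact HasFDerivAt.fun_sum fun j _ => (hasG j).hasFDerivAt
  have hpg : pgrad (Ftuple f) k v = ∑ j, g j := hGsum.gradient
  rw [hpg]
  -- compute the sum
  have hgsplit : ∀ j, g j =
      (if j = k then (2⁻¹ : ℝ) • gradient (f j) (w j) + (2⁻¹ : ℝ) • (Complex.I • v (r j)) else 0)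
      + (if r j = k then (2⁻¹ : ℝ) • gradient (f j) (w j) - (2⁻¹ : ℝ) • (Complex.I • v j) else 0) := by
    intro j
    rw [hg]
    simp only [hc₁, hc₂]
    split_ifs <;> module
  have hcond : ∀ j, (r j = k) = (j = k') := by
    intro j
    rw [hk']
    exact propext (Equiv.eq_symm_apply r).symm
  have : (∑ j, g j) =
      ((2⁻¹ : ℝ) • gradient (f k) (w k) + (2⁻¹ : ℝ) • (Complex.I • v (r k)))
      + ((2⁻¹ : ℝ) • gradient (f k') (w k') - (2⁻¹ : ℝ) • (Complex.I • v k')) := by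
    simp_rw [hgsplit, hcond, Finset.sum_add_distrib, Finset.sum_ite_eq' Finset.univ,
      Finset.mem_univ, if_true]
  rw [this, hgrad k, hgrad k']
  have h1 : v (r k) = z k + σ k (z k) - v k := by rw [hzsum k]; abel
  have h2 : v k' = z k' + σ k' (z k') - v k := by
    have := hzsum k'
    rw [hk', Equiv.apply_symm_apply] at this
    rw [this]; abel
  rw [h1, h2]
  module
end
end

section
/- Let n be odd and σ = (σ_1,…,σ_n) a tuple of C¹-diffeomorphisms of ℂ^d with elementary generating functions f_1,…,f_n such that each ψ_{σ_k} is a C¹-diffeomorphism. Set Φ := σ_n∘⋯∘σ_1, and for v ∈ (ℂ^d)^n set w_j := (v_j+v_{j+1})/2 (v_{n+1} := v_1) and z_j := ψ_{σ_j}⁻¹(w_j). Then: (i) ∇_{v_k}F_σ(v) = 0 for all k ∈ {2,…,n} if and only if z_{k+1} = σ_k(z_k) for all k ∈ {1,…,n−1}; (ii) when these hold, v_1 = (z_1 + Φ(z_1))/2 and ∇_{v_1}F_σ(v) = i·(z_1 − Φ(z_1)); (iii) the differential of the map v ↦ (∇_{v_2}F_σ(v),…,∇_{v_n}F_σ(v))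 is surjective at every point where this map vanishes. -/
noncomputable section
open scoped RealInnerProductSpace
open Complex Function

/-- σ_n ∘ ⋯ ∘ σ_1. -/
def compTuple {d n : ℕ} (σ : Fin n → (Cd d → Cd d)) : Cd d → Cd d :=
  fun z => (List.ofFn σ).foldl (fun y g => g y) z


section AuxLemmas

variable {d : ℕ}

lemma inner_I_right (c x : Cd d) : ⟪c, Complex.I • x⟫ = ⟪-(Complex.I • c), x⟫ := by
  simp only [PiLp.inner_apply, PiLp.smul_apply, PiLp.neg_apply, Complex.inner, smul_eq_mul,
    map_mul, map_neg, Complex.mul_re, Complex.mul_im, Complex.conj_re, Complex.conj_im,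
    Complex.I_re, Complex.I_im, Complex.neg_re, Complex.neg_im]
  exact Finset.sum_congr rfl fun k _ => by ring

lemma inner_I_self (x : Cd d) : ⟪x, Complex.I • x⟫ = 0 := by
  simp only [PiLp.inner_apply, PiLp.smul_apply, Complex.inner, smul_eq_mul, Complex.mul_re,
    Complex.mul_im, Complex.conj_re, Complex.conj_im, map_mul, Complex.I_re, Complex.I_im]
  refine Finset.sum_eq_zero fun k _ => by ring

open InnerProductSpace in
lemma toDual_comp_half (g : Cd d) :
    (toDual ℝ (Cd d) g).comp ((2⁻¹:ℝ) • ContinuousLinearMap.id ℝ (Cd d))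
      = toDual ℝ (Cd d) ((2⁻¹:ℝ) • g) := by
  ext x
  simp [toDual_apply_apply, real_inner_smul_left, real_inner_smul_right]

lemma hasFDeriv_half_left (c : Cd d) (x₀ : Cd d) :
    HasFDerivAt (fun x : Cd d => (2⁻¹:ℝ) • (x + c))
      ((2⁻¹:ℝ) • ContinuousLinearMap.id ℝ (Cd d)) x₀ := by
  have : (fun x : Cd d => (2⁻¹:ℝ) • (x + c)) = fun x => (2⁻¹:ℝ) • x + (2⁻¹:ℝ) • c := by
    funext x; rw [smul_add]
  rw [this]
  exact ((hasFDerivAt_id x₀).const_smul (2⁻¹:ℝ)).add_const _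

lemma hasFDeriv_half_right (c : Cd d) (x₀ : Cd d) :
    HasFDerivAt (fun x : Cd d => (2⁻¹:ℝ) • (c + x))
      ((2⁻¹:ℝ) • ContinuousLinearMap.id ℝ (Cd d)) x₀ := by
  have : (fun x : Cd d => (2⁻¹:ℝ) • (c + x)) = fun x => (2⁻¹:ℝ) • (x + c) := by
    funext x; rw [add_comm]
  rw [this]; exact hasFDeriv_half_left c x₀

open InnerProductSpace in
lemma hasFDeriv_inner_left (c : Cd d) (x₀ : Cd d) :
    HasFDerivAt (fun x : Cd d => (2⁻¹:ℝ) * ⟪x, Complex.I • c⟫)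
      (toDual ℝ (Cd d) ((2⁻¹:ℝ) • (Complex.I • c))) x₀ := by
  have : (fun x : Cd d => (2⁻¹:ℝ) * ⟪x, Complex.I • c⟫)
      = fun x => toDual ℝ (Cd d) ((2⁻¹:ℝ) • (Complex.I • c)) x := by
    funext x
    rw [toDual_apply_apply, real_inner_smul_left, real_inner_comm]
  rw [this]
  exact (toDual ℝ (Cd d) ((2⁻¹:ℝ) • (Complex.I • c))).hasFDerivAt

open InnerProductSpace in
lemma hasFDeriv_inner_right (c : Cd d) (x₀ : Cd d) :
    HasFDerivAt (fun x : Cd d => (2⁻¹:ℝ) * ⟪c, Complex.I • x⟫)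
      (toDual ℝ (Cd d) (-((2⁻¹:ℝ) • (Complex.I • c)))) x₀ := by
  have : (fun x : Cd d => (2⁻¹:ℝ) * ⟪c, Complex.I • x⟫)
      = fun x => toDual ℝ (Cd d) (-((2⁻¹:ℝ) • (Complex.I • c))) x := by
    funext x
    rw [toDual_apply_apply, inner_I_right, ← real_inner_smul_left, smul_neg]
  rw [this]
  exact (toDual ℝ (Cd d) _).hasFDerivAt

lemma telescope_range {V : Type*} [AddCommGroup V] [Module ℝ V] (b : ℕ → V) :
    ∀ N : ℕ, ∑ k ∈ Finset.range N, ((-1:ℝ))^k • (b k + b (k+1)) = b 0 - ((-1:ℝ))^N • b N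
  | 0 => by simp
  | (N+1) => by
    rw [Finset.sum_range_succ, telescope_range b N, pow_succ]
    match_scalars <;> ring

open Fin.NatCast in
lemma telescope_fin {V : Type*} [AddCommGroup V] [Module ℝ V] {m : ℕ} (hodd : Odd (m+1))
    (a : Fin (m+1) → V) (j : Fin (m+1)) :
    ∑ k : Fin (m+1), ((-1:ℝ))^(k:ℕ) • (a (j+k) + a (j+k+1)) = (2:ℝ) • a j := by
  have h : ∑ k : Fin (m+1), ((-1:ℝ))^(k:ℕ) • (a (j+k) + a (j+k+1))
      = ∑ k ∈ Finset.range (m+1),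
          ((-1:ℝ))^k • (a (j+(k:Fin (m+1))) + a (j+(k:Fin (m+1))+1)) := by
    rw [← Fin.sum_univ_eq_sum_range
      (fun k => ((-1:ℝ))^k • (a (j+(k:Fin (m+1))) + a (j+(k:Fin (m+1))+1)))]
    simp [Fin.cast_val_eq_self]
  rw [h]
  have h2 : ∀ k : ℕ, a (j+(k:Fin (m+1))+1) = a (j + ((k+1 : ℕ) : Fin (m+1))) := by
    intro k; rw [Nat.cast_add_one, add_assoc]
  calc ∑ k ∈ Finset.range (m+1), ((-1:ℝ))^k • (a (j+(k:Fin (m+1))) + a (j+(k:Fin (m+1))+1))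
      = ∑ k ∈ Finset.range (m+1), ((-1:ℝ))^k • ((fun p : ℕ => a (j + (p : Fin (m+1)))) k
          + (fun p : ℕ => a (j + (p : Fin (m+1)))) (k+1)) := by
        refine Finset.sum_congr rfl fun k _ => by rw [h2]
    _ = a (j + ((0:ℕ) : Fin (m+1))) - ((-1:ℝ))^(m+1) • a (j + ((m+1 : ℕ) : Fin (m+1))) := by
        rw [telescope_range]
    _ = (2:ℝ) • a j := by
        rw [Odd.neg_one_pow hodd]
        simp [Fin.natCast_self]
        module

lemma TU {V : Type*} [AddCommGroup V] [Module ℝ V] {m : ℕ} (hodd : Odd (m+1))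
    (δ : Fin (m+1) → V) (j : Fin (m+1)) :
    (2⁻¹:ℝ) • ((∑ k : Fin (m+1), ((-1:ℝ))^(k:ℕ) • δ (j+k))
      + (∑ k : Fin (m+1), ((-1:ℝ))^(k:ℕ) • δ (j+1+k))) = δ j := by
  have h : (∑ k : Fin (m+1), ((-1:ℝ))^(k:ℕ) • δ (j+k))
      + (∑ k : Fin (m+1), ((-1:ℝ))^(k:ℕ) • δ (j+1+k))
      = ∑ k : Fin (m+1), ((-1:ℝ))^(k:ℕ) • (δ (j+k) + δ (j+k+1)) := by
    rw [← Finset.sum_add_distrib]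
    refine Finset.sum_congr rfl fun k _ => by rw [← smul_add, add_right_comm]
  rw [h, telescope_fin hodd δ j, smul_smul]; norm_num

lemma UT {V : Type*} [AddCommGroup V] [Module ℝ V] {m : ℕ} (hodd : Odd (m+1))
    (v : Fin (m+1) → V) (j : Fin (m+1)) :
    ∑ k : Fin (m+1), ((-1:ℝ))^(k:ℕ) • ((2⁻¹:ℝ) • (v (j+k) + v (j+k+1))) = v j := by
  have h : ∑ k : Fin (m+1), ((-1:ℝ))^(k:ℕ) • ((2⁻¹:ℝ) • (v (j+k) + v (j+k+1)))
      = (2⁻¹:ℝ) • ∑ k : Fin (m+1), ((-1:ℝ))^(k:ℕ) • (v (j+k) + v (j+k+1)) := by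
    rw [Finset.smul_sum]
    exact Finset.sum_congr rfl fun k _ => smul_comm _ _ _
  rw [h, telescope_fin hodd v j, smul_smul]; norm_num

lemma foldl_chain {α : Type*} : ∀ {m : ℕ} (σ : Fin (m+1) → (α → α)) (zz : Fin (m+1) → α),
    (∀ k : Fin (m+1), (k:ℕ)+1 < m+1 → zz (k+1) = σ k (zz k)) →
    (List.ofFn σ).foldl (fun y g => g y) (zz 0) = σ (Fin.last m) (zz (Fin.last m))
  | 0, σ, zz, _ => by
    simp [List.ofFn_succ]
  | (m+1), σ, zz, h => by
    rw [List.ofFn_succ', List.concat_eq_append, List.foldl_append]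
    simp only [List.foldl_cons, List.foldl_nil]
    have hc : ∀ k : Fin (m+1), (k:ℕ)+1 < m+1 →
        (fun i => zz i.castSucc) (k+1) = (fun i => σ i.castSucc) k ((fun i => zz i.castSucc) k) := by
      intro k hk
      have hcs : (k+1).castSucc = k.castSucc + 1 := by
        apply Fin.ext
        rw [Fin.coe_castSucc, Fin.val_add_one_of_lt (Fin.lt_def.mpr (by rw [Fin.val_last]; omega)),
          Fin.val_add_one_of_lt (Fin.castSucc_lt_last k), Fin.coe_castSucc]
      simp only []
      rw [hcs]
      exact h k.castSucc (by rw [Fin.coe_castSucc]; omega)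
    have IH := foldl_chain (fun i => σ i.castSucc) (fun i => zz i.castSucc) hc
    simp only [Fin.castSucc_zero] at IH
    rw [IH]
    have hlast : (Fin.last m).castSucc + 1 = Fin.last (m+1) := by
      apply Fin.ext
      rw [Fin.val_add_one_of_lt (Fin.castSucc_lt_last _), Fin.coe_castSucc]
      simp
    have hh := h ((Fin.last m).castSucc) (by rw [Fin.coe_castSucc]; simp)
    rw [hlast] at hh
    rw [← hh]

open InnerProductSpace in
lemma pgrad_Ftuple {m : ℕ} (f : Fin (m+1) → (Cd d → ℝ)) (hsm : ∀ k, ContDiff ℝ (⊤ : ℕ∞) (f k))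
    (j : Fin (m+1)) (u : Fin (m+1) → Cd d) :
    pgrad (Ftuple f) j u
      = ((2⁻¹:ℝ) • gradient (f j) ((2⁻¹:ℝ) • (u j + u (j+1)))
          + (2⁻¹:ℝ) • (Complex.I • u (j+1)))
        + ((2⁻¹:ℝ) • gradient (f (j-1)) ((2⁻¹:ℝ) • (u (j-1) + u j))
          + -((2⁻¹:ℝ) • (Complex.I • u (j-1)))) := by
  classical
  have hdiff : ∀ k (x : Cd d), HasFDerivAt (f k) (toDual ℝ (Cd d) (gradient (f k) x)) x :=
    fun k x => (((hsm k).differentiable (by simp)) x).hasGradientAt.hasFDerivAt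
  have key : ∀ k : Fin (m+1), HasFDerivAt
      (fun x => f k ((2⁻¹:ℝ) • (Function.update u j x k + Function.update u j x (k+1)))
        + (2⁻¹:ℝ) * ⟪Function.update u j x k, Complex.I • Function.update u j x (k+1)⟫)
      (toDual ℝ (Cd d)
        ((if k = j then
            (2⁻¹:ℝ) • gradient (f k) ((2⁻¹:ℝ) • (u k + u (k+1)))
              + (2⁻¹:ℝ) • (Complex.I • u (k+1)) else 0)
          + (if k + 1 = j then
            (2⁻¹:ℝ) • gradient (f k) ((2⁻¹:ℝ) • (u k + u (k+1)))
              + -((2⁻¹:ℝ) • (Complex.I • u k)) else 0))) (u j) := by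
    intro k
    by_cases h1 : k = j
    · subst h1
      by_cases h2 : k + 1 = k
      · rw [if_pos rfl, if_pos h2]
        have hfe : (fun x => f k ((2⁻¹:ℝ) • (Function.update u k x k + Function.update u k x (k+1)))
            + (2⁻¹:ℝ) * ⟪Function.update u k x k, Complex.I • Function.update u k x (k+1)⟫)
            = fun x : Cd d => f k x := by
          funext x
          rw [h2, Function.update_self, inner_I_self, mul_zero, add_zero,
            show (2⁻¹:ℝ) • (x + x) = x by module]
        rw [hfe]
        have hval : ((2⁻¹:ℝ) • gradient (f k) ((2⁻¹:ℝ) • (u k + u (k+1)))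
              + (2⁻¹:ℝ) • (Complex.I • u (k+1)))
            + ((2⁻¹:ℝ) • gradient (f k) ((2⁻¹:ℝ) • (u k + u (k+1)))
              + -((2⁻¹:ℝ) • (Complex.I • u k)))
            = gradient (f k) (u k) := by
          rw [h2, show (2⁻¹:ℝ) • (u k + u k) = u k by module]
          module
        rw [hval]
        exact hdiff k (u k)
      · rw [if_pos rfl, if_neg h2, add_zero]
        have hfe : (fun x => f k ((2⁻¹:ℝ) • (Function.update u k x k + Function.update u k x (k+1)))
            + (2⁻¹:ℝ) * ⟪Function.update u k x k, Complex.I • Function.update u k x (k+1)⟫)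
            = fun x : Cd d => f k ((2⁻¹:ℝ) • (x + u (k+1)))
              + (2⁻¹:ℝ) * ⟪x, Complex.I • u (k+1)⟫ := by
          funext x
          rw [Function.update_self, Function.update_of_ne h2]
        rw [hfe]
        have h₁ : HasFDerivAt (fun x : Cd d => f k ((2⁻¹:ℝ) • (x + u (k+1))))
            (toDual ℝ (Cd d) ((2⁻¹:ℝ) • gradient (f k) ((2⁻¹:ℝ) • (u k + u (k+1))))) (u k) := by
          have := (hdiff k ((2⁻¹:ℝ) • (u k + u (k+1)))).comp (u k)
            (hasFDeriv_half_left (u (k+1)) (u k))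
          rwa [toDual_comp_half] at this
        have := h₁.add (hasFDeriv_inner_left (u (k+1)) (u k))
        rwa [← map_add] at this
    · by_cases h2 : k + 1 = j
      · rw [if_neg h1, if_pos h2, zero_add]
        have hfe : (fun x => f k ((2⁻¹:ℝ) • (Function.update u j x k + Function.update u j x (k+1)))
            + (2⁻¹:ℝ) * ⟪Function.update u j x k, Complex.I • Function.update u j x (k+1)⟫)
            = fun x : Cd d => f k ((2⁻¹:ℝ) • (u k + x))
              + (2⁻¹:ℝ) * ⟪u k, Complex.I • x⟫ := by
          funext x
          rw [Function.update_of_ne h1, h2, Function.update_self]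
        rw [hfe]
        have h₁ : HasFDerivAt (fun x : Cd d => f k ((2⁻¹:ℝ) • (u k + x)))
            (toDual ℝ (Cd d) ((2⁻¹:ℝ) • gradient (f k) ((2⁻¹:ℝ) • (u k + u (k+1))))) (u j) := by
          have := (hdiff k ((2⁻¹:ℝ) • (u k + u j))).comp (u j)
            (hasFDeriv_half_right (u k) (u j))
          rw [toDual_comp_half] at this
          rw [h2]
          exact this
        have := h₁.add (hasFDeriv_inner_right (u k) (u j))
        rwa [← map_add] at this
      · rw [if_neg h1, if_neg h2, add_zero, map_zero]
        have hfe : (fun x => f k ((2⁻¹:ℝ) • (Function.update u j x k + Function.update u j x (k+1)))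
            + (2⁻¹:ℝ) * ⟪Function.update u j x k, Complex.I • Function.update u j x (k+1)⟫)
            = fun _ : Cd d => f k ((2⁻¹:ℝ) • (u k + u (k+1)))
              + (2⁻¹:ℝ) * ⟪u k, Complex.I • u (k+1)⟫ := by
          funext x
          rw [Function.update_of_ne h1, Function.update_of_ne h2]
        rw [hfe]
        exact hasFDerivAt_const _ _
  have hFeq : (fun x => Ftuple f (Function.update u j x))
      = fun x => ∑ k : Fin (m+1),
          (f k ((2⁻¹:ℝ) • (Function.update u j x k + Function.update u j x (k+1)))
            + (2⁻¹:ℝ) * ⟪Function.update u j x k, Complex.I • Function.update u j x (k+1)⟫) := by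
    funext x
    unfold Ftuple
    refine Finset.sum_congr rfl fun k _ => ?_
    rw [finRotate_succ_apply]
  have hsum : HasFDerivAt (fun x => Ftuple f (Function.update u j x))
      (toDual ℝ (Cd d) (∑ k : Fin (m+1),
        ((if k = j then
            (2⁻¹:ℝ) • gradient (f k) ((2⁻¹:ℝ) • (u k + u (k+1)))
              + (2⁻¹:ℝ) • (Complex.I • u (k+1)) else 0)
          + (if k + 1 = j then
            (2⁻¹:ℝ) • gradient (f k) ((2⁻¹:ℝ) • (u k + u (k+1)))
              + -((2⁻¹:ℝ) • (Complex.I • u k)) else 0)))) (u j) := by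
    rw [hFeq, map_sum]
    exact HasFDerivAt.fun_sum (fun k _ => key k)
  have hgrad := hsum.fderiv
  have hmain : pgrad (Ftuple f) j u = ∑ k : Fin (m+1),
        ((if k = j then
            (2⁻¹:ℝ) • gradient (f k) ((2⁻¹:ℝ) • (u k + u (k+1)))
              + (2⁻¹:ℝ) • (Complex.I • u (k+1)) else 0)
          + (if k + 1 = j then
            (2⁻¹:ℝ) • gradient (f k) ((2⁻¹:ℝ) • (u k + u (k+1)))
              + -((2⁻¹:ℝ) • (Complex.I • u k)) else 0)) := by
    show gradient (fun x => Ftuple f (Function.update u j x)) (u j) = _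
    rw [gradient, hgrad]
    exact (toDual ℝ (Cd d)).symm_apply_apply _
  rw [hmain, Finset.sum_add_distrib]
  congr 1
  · rw [Finset.sum_ite_eq' Finset.univ j]
    simp
  · have hcond : ∀ k : Fin (m+1), (k + 1 = j) = (k = j - 1) :=
      fun k => propext ⟨fun h => by rw [← h]; abel, fun h => by rw [h]; abel⟩
    simp only [hcond]
    rw [Finset.sum_ite_eq' Finset.univ (j-1)]
    simp only [Finset.mem_univ, if_true]
    rw [sub_add_cancel]

lemma pgrad_z {m : ℕ} (σ : Fin (m+1) → (Cd d → Cd d)) (f : Fin (m+1) → (Cd d → ℝ))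
    (hsm : ∀ k, ContDiff ℝ (⊤ : ℕ∞) (f k)) (hgf : ∀ k, IsElemGF (σ k) (f k))
    (v : Fin (m+1) → Cd d) (j : Fin (m+1)) :
    pgrad (Ftuple f) j v
      = Complex.I • (Function.invFun (psiMap (σ j)) ((2⁻¹:ℝ) • (v j + v (j+1)))
          - σ (j-1) (Function.invFun (psiMap (σ (j-1))) ((2⁻¹:ℝ) • (v (j-1) + v j)))) := by
  have hψ : ∀ k (y : Cd d), psiMap (σ k) (Function.invFun (psiMap (σ k)) y) = y :=
    fun k y => Function.rightInverse_invFun (hgf k).1.2 y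
  set zj := Function.invFun (psiMap (σ j)) ((2⁻¹:ℝ) • (v j + v (j+1))) with hzj
  set zp := Function.invFun (psiMap (σ (j-1))) ((2⁻¹:ℝ) • (v (j-1) + v j)) with hzp
  have e1 : (2⁻¹:ℝ) • (v j + v (j+1)) = (2⁻¹:ℝ) • (zj + σ j zj) := (hψ j _).symm
  have e2 : (2⁻¹:ℝ) • (v (j-1) + v j) = (2⁻¹:ℝ) • (zp + σ (j-1) zp) := (hψ (j-1) _).symm
  have g1 : gradient (f j) ((2⁻¹:ℝ) • (v j + v (j+1))) = Complex.I • (zj - σ j zj) := by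
    rw [e1]; exact (hgf j).2 zj
  have g2 : gradient (f (j-1)) ((2⁻¹:ℝ) • (v (j-1) + v j))
      = Complex.I • (zp - σ (j-1) zp) := by
    rw [e2]; exact (hgf (j-1)).2 zp
  have s1 : v j + v (j+1) = zj + σ j zj :=
    smul_right_injective (Cd d) (by norm_num : (2⁻¹:ℝ) ≠ 0) e1
  have s2 : v (j-1) + v j = zp + σ (j-1) zp :=
    smul_right_injective (Cd d) (by norm_num : (2⁻¹:ℝ) ≠ 0) e2
  have e3 : v (j+1) = zj + σ j zj - v j := by rw [← s1]; abel
  have e4 : v (j-1) = zp + σ (j-1) zp - v j := by rw [← s2]; abel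
  rw [pgrad_Ftuple f hsm j v, g1, g2, e3, e4]
  module

open Fin.NatCast in
lemma part3 {m : ℕ} (hodd : Odd (m+1)) (σ : Fin (m+1) → (Cd d → Cd d))
    (f : Fin (m+1) → (Cd d → ℝ))
    (hC1 : ∀ k, ContDiff ℝ 1 (σ k))
    (hψC1 : ∀ k, ContDiff ℝ 1 (psiMap (σ k)) ∧ ContDiff ℝ 1 (Function.invFun (psiMap (σ k))))
    (hsm : ∀ k, ContDiff ℝ (⊤ : ℕ∞) (f k)) (hgf : ∀ k, IsElemGF (σ k) (f k))
    (z0 : Fin (m+1)) (hz0 : z0 = 0) (v : Fin (m+1) → Cd d) :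
    Function.Surjective (fderiv ℝ
      (fun (u : Fin (m+1) → Cd d) (k : {k : Fin (m+1) // k ≠ z0}) =>
        pgrad (Ftuple f) k.1 u) v) := by
  classical
  set ψinv : Fin (m+1) → (Cd d → Cd d) := fun k => Function.invFun (psiMap (σ k)) with hψinv
  have hinvdiff : ∀ k, Differentiable ℝ (ψinv k) := fun k => (hψC1 k).2.differentiable (by simp)
  have hψdiff : ∀ k, Differentiable ℝ (psiMap (σ k)) := fun k => (hψC1 k).1.differentiable (by simp)
  have hσdiff : ∀ k, Differentiable ℝ (σ k) := fun k => (hC1 k).differentiable (by simp)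
  set Tlin : (Fin (m+1) → Cd d) →L[ℝ] (Fin (m+1) → Cd d) :=
    ContinuousLinearMap.pi (fun j => (2⁻¹:ℝ) •
      ((ContinuousLinearMap.proj j : (Fin (m+1) → Cd d) →L[ℝ] Cd d)
        + (ContinuousLinearMap.proj (j+1) : (Fin (m+1) → Cd d) →L[ℝ] Cd d))) with hTlin
  have hTapp : ∀ (u : Fin (m+1) → Cd d) (j : Fin (m+1)),
      Tlin u j = (2⁻¹:ℝ) • (u j + u (j+1)) := by
    intro u j
    simp [hTlin, ContinuousLinearMap.pi_apply]
  set g : (Fin (m+1) → Cd d) → {k : Fin (m+1) // k ≠ z0} → Cd d := fun w k =>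
    Complex.I • (ψinv k.1 (w k.1) - σ (k.1-1) (ψinv (k.1-1) (w (k.1-1)))) with hg
  have hGg : (fun (u : Fin (m+1) → Cd d) (k : {k : Fin (m+1) // k ≠ z0}) =>
      pgrad (Ftuple f) k.1 u) = fun u => g (Tlin u) := by
    funext u k
    rw [pgrad_z σ f hsm hgf u k.1]
    show _ = Complex.I • (ψinv k.1 (Tlin u k.1) - σ (k.1-1) (ψinv (k.1-1) (Tlin u (k.1-1))))
    rw [hTapp u k.1, hTapp u (k.1-1), sub_add_cancel]
  set pt := Tlin v with hpt
  set L : (k : {k : Fin (m+1) // k ≠ z0}) → ((Fin (m+1) → Cd d) →L[ℝ] Cd d) := fun k =>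
    Complex.I • (((fderiv ℝ (ψinv k.1) (pt k.1)).comp (ContinuousLinearMap.proj k.1))
      - ((fderiv ℝ (σ (k.1-1)) (ψinv (k.1-1) (pt (k.1-1)))).comp
          ((fderiv ℝ (ψinv (k.1-1)) (pt (k.1-1))).comp
            (ContinuousLinearMap.proj (k.1-1))))) with hL
  have hgd : HasFDerivAt g (ContinuousLinearMap.pi L) pt := by
    apply hasFDerivAt_pi'.2
    intro k
    rw [ContinuousLinearMap.proj_pi]
    have h1 : HasFDerivAt (fun w : Fin (m+1) → Cd d => ψinv k.1 (w k.1))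
        ((fderiv ℝ (ψinv k.1) (pt k.1)).comp (ContinuousLinearMap.proj k.1)) pt :=
      (((hinvdiff k.1) (pt k.1)).hasFDerivAt).comp (f := fun w : Fin (m+1) → Cd d => w k.1) pt
        (hasFDerivAt_apply (𝕜 := ℝ) k.1 pt)
    have h2 : HasFDerivAt (fun w : Fin (m+1) → Cd d => σ (k.1-1) (ψinv (k.1-1) (w (k.1-1))))
        ((fderiv ℝ (σ (k.1-1)) (ψinv (k.1-1) (pt (k.1-1)))).comp
          ((fderiv ℝ (ψinv (k.1-1)) (pt (k.1-1))).comp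
            (ContinuousLinearMap.proj (k.1-1)))) pt :=
      (((hσdiff (k.1-1)) (ψinv (k.1-1) (pt (k.1-1)))).hasFDerivAt).comp
        (f := ψinv (k.1-1) ∘ fun w : Fin (m+1) → Cd d => w (k.1-1)) pt
        ((((hinvdiff (k.1-1)) (pt (k.1-1))).hasFDerivAt).comp
          (f := fun w : Fin (m+1) → Cd d => w (k.1-1)) pt
          (hasFDerivAt_apply (𝕜 := ℝ) (k.1-1) pt))
    exact ((h1.sub h2).const_smul Complex.I)
  have hfd : fderiv ℝ (fun (u : Fin (m+1) → Cd d) (k : {k : Fin (m+1) // k ≠ z0}) =>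
      pgrad (Ftuple f) k.1 u) v = (ContinuousLinearMap.pi L).comp Tlin := by
    rw [hGg]
    have hcomp : (fun u => g (Tlin u)) = g ∘ Tlin := rfl
    rw [hcomp, fderiv_comp v hgd.differentiableAt Tlin.differentiableAt,
      Tlin.fderiv, hgd.fderiv]
  rw [hfd, ContinuousLinearMap.coe_comp']
  apply Function.Surjective.comp
  · intro a
    set A : Fin (m+1) → (Cd d →L[ℝ] Cd d) := fun jj =>
      fderiv ℝ (σ (jj-1)) (ψinv (jj-1) (pt (jj-1))) with hA
    set a' : Fin (m+1) → Cd d := fun jj => if h : jj = z0 then 0 else a ⟨jj, h⟩ with ha'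
    set X : ℕ → Cd d := fun p => Nat.rec (0 : Cd d)
      (fun q ih => -(Complex.I • a' ((q+1 : ℕ) : Fin (m+1)))
        + A ((q+1 : ℕ) : Fin (m+1)) ih) p with hX
    have hXsucc : ∀ q : ℕ, X (q+1) = -(Complex.I • a' ((q+1 : ℕ) : Fin (m+1)))
        + A ((q+1 : ℕ) : Fin (m+1)) (X q) := fun q => rfl
    set δw : Fin (m+1) → Cd d := fun jj =>
      (fderiv ℝ (psiMap (σ jj)) (ψinv jj (pt jj))) (X jj.val) with hδw
    have hinvd : ∀ (jj : Fin (m+1)) (ξ : Cd d),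
        (fderiv ℝ (ψinv jj) (pt jj)) ((fderiv ℝ (psiMap (σ jj)) (ψinv jj (pt jj))) ξ) = ξ := by
      intro jj ξ
      have hri : psiMap (σ jj) (ψinv jj (pt jj)) = pt jj :=
        Function.rightInverse_invFun (hgf jj).1.2 (pt jj)
      have hco : (ψinv jj) ∘ (psiMap (σ jj)) = id :=
        funext (Function.leftInverse_invFun (hgf jj).1.1)
      have hch := fderiv_comp (ψinv jj (pt jj))
        ((hinvdiff jj).differentiableAt (x := psiMap (σ jj) (ψinv jj (pt jj))))
        ((hψdiff jj).differentiableAt)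
      rw [hco, fderiv_id, hri] at hch
      have := congrArg (fun (M : (Cd d) →L[ℝ] (Cd d)) => M ξ) hch.symm
      simpa using this
    refine ⟨δw, ?_⟩
    funext k
    have hk0 : k.1 ≠ 0 := by rw [← hz0]; exact k.2
    have hkval : (k.1 : ℕ) = ((k.1 - 1 : Fin (m+1)) : ℕ) + 1 := by
      rw [Fin.coe_sub_one, if_neg hk0]
      have : (k.1 : ℕ) ≠ 0 := fun hc => hk0 (Fin.ext hc)
      omega
    have hcast : ((((k.1 - 1 : Fin (m+1)) : ℕ) + 1 : ℕ) : Fin (m+1)) = k.1 := by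
      rw [← hkval]; exact Fin.cast_val_eq_self _
    show (ContinuousLinearMap.pi L) δw k = a k
    rw [ContinuousLinearMap.pi_apply, hL]
    simp only [ContinuousLinearMap.smul_apply, ContinuousLinearMap.sub_apply,
      ContinuousLinearMap.comp_apply, ContinuousLinearMap.proj_apply]
    rw [hδw]
    rw [hinvd k.1 (X (k.1 : ℕ)), hinvd (k.1-1) (X ((k.1-1 : Fin (m+1)) : ℕ))]
    rw [hkval, hXsucc, hcast]
    have ha'k : a' k.1 = a k := by
      have h1 : a' k.1 = if h : k.1 = z0 then 0 else a ⟨k.1, h⟩ := rfl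
      rw [h1, dif_neg k.2]
    rw [ha'k]
    rw [add_sub_cancel_right, smul_neg, smul_smul, Complex.I_mul_I, neg_smul, one_smul, neg_neg]
  · intro δ
    refine ⟨fun j => ∑ k : Fin (m+1), ((-1:ℝ))^(k:ℕ) • δ (j+k), ?_⟩
    funext j
    rw [hTapp]
    exact TU hodd δ j

end AuxLemmas

theorem stmt4 (d n : ℕ) (hn : 1 ≤ n) (hodd : Odd n)
    (σ : Fin n → (Cd d → Cd d)) (f : Fin n → (Cd d → ℝ))
    (hbij : ∀ k, Function.Bijective (σ k))
    (hC1 : ∀ k, ContDiff ℝ 1 (σ k) ∧ ContDiff ℝ 1 (Function.invFun (σ k)))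
    (hψC1 : ∀ k, ContDiff ℝ 1 (psiMap (σ k)) ∧ ContDiff ℝ 1 (Function.invFun (psiMap (σ k))))
    (hsm : ∀ k, ContDiff ℝ (⊤ : ℕ∞) (f k))
    (hgf : ∀ k, IsElemGF (σ k) (f k))
    -- the data w, z associated to an arbitrary point v
    (w : (Fin n → Cd d) → Fin n → Cd d)
    (hw : ∀ v k, w v k = (2⁻¹ : ℝ) • (v k + v (finRotate n k)))
    (z : (Fin n → Cd d) → Fin n → Cd d)
    (hz : ∀ v k, z v k = Function.invFun (psiMap (σ k)) (w v k)) :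
    -- (i)
    (∀ v : Fin n → Cd d,
      (∀ k : Fin n, k ≠ ⟨0, hn⟩ → pgrad (Ftuple f) k v = 0) ↔
      (∀ k : Fin n, (k : ℕ) + 1 < n → z v (finRotate n k) = σ k (z v k))) ∧
    -- (ii)
    (∀ v : Fin n → Cd d,
      (∀ k : Fin n, k ≠ ⟨0, hn⟩ → pgrad (Ftuple f) k v = 0) →
      v ⟨0, hn⟩ = (2⁻¹ : ℝ) • (z v ⟨0, hn⟩ + compTuple σ (z v ⟨0, hn⟩)) ∧
      pgrad (Ftuple f) ⟨0, hn⟩ v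
        = Complex.I • (z v ⟨0, hn⟩ - compTuple σ (z v ⟨0, hn⟩))) ∧
    -- (iii)
    (∀ v : Fin n → Cd d,
      (∀ k : Fin n, k ≠ ⟨0, hn⟩ → pgrad (Ftuple f) k v = 0) →
      Function.Surjective
        (fderiv ℝ
          (fun (u : Fin n → Cd d) (k : {k : Fin n // k ≠ ⟨0, hn⟩}) =>
            pgrad (Ftuple f) k.1 u) v)) := by
  obtain ⟨m, rfl⟩ : ∃ m, n = m + 1 := ⟨n - 1, by omega⟩
  have h00 : (⟨0, hn⟩ : Fin (m+1)) = 0 := Fin.ext (by simp)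
  have hwz : ∀ (v : Fin (m+1) → Cd d) (j : Fin (m+1)),
      z v j = Function.invFun (psiMap (σ j)) ((2⁻¹:ℝ) • (v j + v (j+1))) := by
    intro v j; rw [hz, hw, finRotate_succ_apply]
  have hpz : ∀ (v : Fin (m+1) → Cd d) (j : Fin (m+1)),
      pgrad (Ftuple f) j v = Complex.I • (z v j - σ (j-1) (z v (j-1))) := by
    intro v j
    rw [pgrad_z σ f hsm hgf v j, hwz v j, hwz v (j-1), sub_add_cancel]
  have hIcancel : ∀ x : Cd d, Complex.I • x = 0 → x = 0 := by
    intro x hx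
    have h2 := congrArg (fun t => Complex.I • t) hx
    simp only [smul_smul, Complex.I_mul_I, smul_zero, neg_smul, one_smul, neg_eq_zero] at h2
    exact h2
  have part1 : ∀ v : Fin (m+1) → Cd d,
      (∀ k : Fin (m+1), k ≠ ⟨0, hn⟩ → pgrad (Ftuple f) k v = 0) ↔
      (∀ k : Fin (m+1), (k : ℕ) + 1 < m+1 → z v (finRotate (m+1) k) = σ k (z v k)) := by
    intro v
    constructor
    · intro h k hk
      rw [finRotate_succ_apply]
      have hne : (k+1 : Fin (m+1)) ≠ ⟨0, hn⟩ := by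
        rw [h00]
        intro hc
        have hval := congrArg Fin.val hc
        rw [Fin.val_add_one_of_lt (Fin.lt_def.mpr (by rw [Fin.val_last]; omega))] at hval
        simp at hval
      have h1 := h (k+1) hne
      rw [hpz v (k+1), add_sub_cancel_right] at h1
      exact sub_eq_zero.mp (hIcancel _ h1)
    · intro h j hj
      rw [hpz v j]
      have hjv : (j : ℕ) ≠ 0 := by
        intro hc
        exact hj (by rw [h00]; exact Fin.ext (by simpa using hc))
      have hk : ((j - 1 : Fin (m+1)) : ℕ) + 1 < m + 1 := by
        rw [Fin.coe_sub_one, if_neg (fun hc => hjv (by rw [hc]; simp))]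
        have := j.isLt
        omega
      have h1 := h (j-1) hk
      rw [finRotate_succ_apply, sub_add_cancel] at h1
      rw [h1, sub_self, smul_zero]
  refine ⟨part1, ?_, ?_⟩
  · intro v hv
    have hchain : ∀ k : Fin (m+1), (k:ℕ)+1 < m+1 → z v (k+1) = σ k (z v k) := by
      intro k hk
      have := (part1 v).1 hv k hk
      rwa [finRotate_succ_apply] at this
    have hfold : compTuple σ (z v 0) = σ (Fin.last m) (z v (Fin.last m)) :=
      foldl_chain σ (fun k => z v k) hchain
    have hlast0 : (0:Fin (m+1)) - 1 = Fin.last m := by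
      apply Fin.ext
      rw [Fin.coe_sub_one, if_pos rfl, Fin.val_last]
    constructor
    · rw [h00]
      have hterm : ∀ k : Fin (m+1), (2⁻¹:ℝ) • (v (0+k) + v (0+k+1))
          = (2⁻¹:ℝ) • (z v k + σ k (z v k)) := by
        intro k
        have hri : psiMap (σ k) (z v k) = (2⁻¹:ℝ) • (v k + v (k+1)) := by
          rw [hwz v k]
          exact Function.rightInverse_invFun (hgf k).1.2 _
        rw [zero_add, ← hri]
        rfl
      have hv0' : v 0 = ∑ k : Fin (m+1), ((-1:ℝ))^(k:ℕ) • ((2⁻¹:ℝ) • (z v k + σ k (z v k))) := by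
        rw [← (UT hodd v 0)]
        exact Finset.sum_congr rfl fun k _ => by rw [hterm k]
      set b : ℕ → Cd d := fun p => if hp : p < m+1 then z v ⟨p, hp⟩ else compTuple σ (z v 0)
        with hb
      have hbk : ∀ k : Fin (m+1), z v k + σ k (z v k) = b (k:ℕ) + b ((k:ℕ)+1) := by
        intro k
        have hb1 : b (k:ℕ) = z v k := by
          rw [hb]; simp only [dif_pos k.isLt, Fin.eta]
        by_cases hk2 : (k:ℕ)+1 < m+1
        · have hb2 : b ((k:ℕ)+1) = z v (k+1) := by
            rw [hb]; simp only [dif_pos hk2]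
            have hfin : (⟨(k:ℕ)+1, hk2⟩ : Fin (m+1)) = k + 1 :=
              Fin.ext ((Fin.val_add_one_of_lt
                (Fin.lt_def.mpr (by rw [Fin.val_last]; omega))).symm)
            rw [hfin]
          rw [hb1, hb2, hchain k hk2]
        · have hklast : k = Fin.last m := Fin.ext (by rw [Fin.val_last]; have := k.isLt; omega)
          have hb2 : b ((k:ℕ)+1) = compTuple σ (z v 0) := by
            rw [hb]; simp only [dif_neg hk2]
          rw [hb1, hb2, hfold, hklast]
      have hsum2 : ∑ k : Fin (m+1), ((-1:ℝ))^(k:ℕ) • (z v k + σ k (z v k))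
          = z v 0 + compTuple σ (z v 0) := by
        calc ∑ k : Fin (m+1), ((-1:ℝ))^(k:ℕ) • (z v k + σ k (z v k))
            = ∑ k : Fin (m+1), (fun p : ℕ => ((-1:ℝ))^p • (b p + b (p+1))) (k:ℕ) :=
              Finset.sum_congr rfl fun k _ => by rw [hbk k]
          _ = ∑ p ∈ Finset.range (m+1), ((-1:ℝ))^p • (b p + b (p+1)) :=
              Fin.sum_univ_eq_sum_range (fun p : ℕ => ((-1:ℝ))^p • (b p + b (p+1))) (m+1)
          _ = b 0 - ((-1:ℝ))^(m+1) • b (m+1) := telescope_range b (m+1)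
          _ = z v 0 + compTuple σ (z v 0) := by
              rw [Odd.neg_one_pow hodd]
              have hb0 : b 0 = z v 0 := by
                have h0' : (⟨0, Nat.succ_pos m⟩ : Fin (m+1)) = 0 := Fin.ext (by simp)
                rw [hb]; simp only [dif_pos (Nat.succ_pos m), h0']
              have hbm : b (m+1) = compTuple σ (z v 0) := by
                rw [hb]; simp only [dif_neg (lt_irrefl (m+1))]
              rw [hb0, hbm]; module
      have hpull : ∑ k : Fin (m+1), ((-1:ℝ))^(k:ℕ) • ((2⁻¹:ℝ) • (z v k + σ k (z v k)))
          = (2⁻¹:ℝ) • ∑ k : Fin (m+1), ((-1:ℝ))^(k:ℕ) • (z v k + σ k (z v k)) := by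
        rw [Finset.smul_sum]
        exact Finset.sum_congr rfl fun k _ => smul_comm _ _ _
      rw [hv0', hpull, hsum2]
    · rw [h00, hpz v 0, hlast0, hfold]
  · intro v _
    exact part3 hodd σ f (fun k => (hC1 k).1) hψC1 hsm hgf ⟨0, hn⟩ h00 v
end
end

section
/- Let σ = (σ_1,…,σ_n) be an n-tuple and δ = (δ_1,…,δ_m) an m-tuple of bijections of ℂ^d with elementary generating functions. Then for all v_1,…,v_{n+m} ∈ ℂ^d, F_{(σ,δ)}(v_1,…,v_{n+m}) = F_{(σ,id)}(v_1,…,v_n,v_{n+1}) + F_{(δ,id)}(v_{n+1},…,v_{n+m},v_1), where (σ,δ) denotes the concatenated (n+m)-tuple and (σ,id), (δ,id) the tuples with the identity map appended. -/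
noncomputable section
open scoped RealInnerProductSpace
open Complex Function

lemma inner_I_skew {d : ℕ} (a b : Cd d) :
    ⟪a, Complex.I • b⟫ + ⟪b, Complex.I • a⟫ = 0 := by
  simp only [PiLp.inner_apply, PiLp.smul_apply, RCLike.inner_apply, smul_eq_mul]
  rw [← Finset.sum_add_distrib]
  apply Finset.sum_eq_zero
  intro i _
  simp [Complex.mul_re]
  ring

lemma finRotate_val {N : ℕ} (hN : 0 < N) (k : Fin N) :
    (finRotate N k).val = (k.val + 1) % N := by
  obtain ⟨N, rfl⟩ := Nat.exists_eq_succ_of_ne_zero hN.ne'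
  rw [finRotate_succ_apply]
  simp [Fin.add_def, Nat.add_mod]

theorem stmt5 (d n m : ℕ) (hn : 1 ≤ n) (hm : 1 ≤ m)
    (σ : Fin n → (Cd d → Cd d)) (f : Fin n → (Cd d → ℝ))
    (δ : Fin m → (Cd d → Cd d)) (g : Fin m → (Cd d → ℝ))
    (hbijσ : ∀ k, Function.Bijective (σ k))
    (hgfσ : ∀ k, ContDiff ℝ (⊤ : ℕ∞) (f k) ∧ IsElemGF (σ k) (f k))
    (hbijδ : ∀ k, Function.Bijective (δ k))
    (hgfδ : ∀ k, ContDiff ℝ (⊤ : ℕ∞) (g k) ∧ IsElemGF (δ k) (g k))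
    (v : Fin (n + m) → Cd d) :
    Ftuple (Fin.append f g) v
      = Ftuple (Fin.snoc f (0 : Cd d → ℝ))
          (fun k : Fin (n + 1) => v (Fin.castLE (by omega) k))
      + Ftuple (Fin.snoc g (0 : Cd d → ℝ))
          (fun k : Fin (m + 1) =>
            if h : (k : ℕ) < m then v ⟨n + (k : ℕ), by omega⟩ else v ⟨0, by omega⟩) := by
  unfold Ftuple
  rw [Fin.sum_univ_add, Fin.sum_univ_castSucc (n := n), Fin.sum_univ_castSucc (n := m)]
  have hS1 : ∀ k : Fin n,
      (Fin.append f g (Fin.castAdd m k)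
          ((2⁻¹ : ℝ) • (v (Fin.castAdd m k) + v (finRotate (n + m) (Fin.castAdd m k))))
        + (2⁻¹ : ℝ) * ⟪v (Fin.castAdd m k), Complex.I • v (finRotate (n + m) (Fin.castAdd m k))⟫)
      = ((Fin.snoc f (0 : Cd d → ℝ) : Fin (n+1) → Cd d → ℝ) k.castSucc
          ((2⁻¹ : ℝ) • (v (Fin.castLE (by omega) k.castSucc)
            + v (Fin.castLE (by omega) (finRotate (n + 1) k.castSucc))))
        + (2⁻¹ : ℝ) * ⟪v (Fin.castLE (by omega) k.castSucc),
            Complex.I • v (Fin.castLE (by omega) (finRotate (n + 1) k.castSucc))⟫) := by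
    intro k
    have hk := k.isLt
    have e1 : Fin.castAdd m k = Fin.castLE (show n + 1 ≤ n + m by omega) k.castSucc := by
      apply Fin.ext; simp
    have e2 : finRotate (n + m) (Fin.castAdd m k)
        = Fin.castLE (show n + 1 ≤ n + m by omega) (finRotate (n + 1) k.castSucc) := by
      apply Fin.ext
      rw [Fin.coe_castLE, finRotate_val (show 0 < n + m by omega),
        finRotate_val (show 0 < n + 1 by omega)]
      simp only [Fin.coe_castAdd, Fin.coe_castSucc]
      rw [Nat.mod_eq_of_lt (by omega), Nat.mod_eq_of_lt (by omega)]
    rw [Fin.append_left, Fin.snoc_castSucc, e2, e1]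
  have hS2 : ∀ k : Fin m,
      (Fin.append f g (Fin.natAdd n k)
          ((2⁻¹ : ℝ) • (v (Fin.natAdd n k) + v (finRotate (n + m) (Fin.natAdd n k))))
        + (2⁻¹ : ℝ) * ⟪v (Fin.natAdd n k), Complex.I • v (finRotate (n + m) (Fin.natAdd n k))⟫)
      = ((Fin.snoc g (0 : Cd d → ℝ) : Fin (m+1) → Cd d → ℝ) k.castSucc
          ((2⁻¹ : ℝ) • ((if h : ((k.castSucc : Fin (m+1)) : ℕ) < m then
                v ⟨n + ((k.castSucc : Fin (m+1)) : ℕ), by omega⟩ else v ⟨0, by omega⟩)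
            + (if h : ((finRotate (m+1) k.castSucc : Fin (m+1)) : ℕ) < m then
                v ⟨n + ((finRotate (m+1) k.castSucc : Fin (m+1)) : ℕ), by omega⟩
              else v ⟨0, by omega⟩)))
        + (2⁻¹ : ℝ) * ⟪(if h : ((k.castSucc : Fin (m+1)) : ℕ) < m then
                v ⟨n + ((k.castSucc : Fin (m+1)) : ℕ), by omega⟩ else v ⟨0, by omega⟩),
            Complex.I • (if h : ((finRotate (m+1) k.castSucc : Fin (m+1)) : ℕ) < m then
                v ⟨n + ((finRotate (m+1) k.castSucc : Fin (m+1)) : ℕ), by omega⟩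
              else v ⟨0, by omega⟩)⟫) := by
    intro k
    have hk := k.isLt
    have hrot : ((finRotate (m+1) k.castSucc : Fin (m+1)) : ℕ) = k.val + 1 := by
      rw [finRotate_val (by omega)]
      simp only [Fin.coe_castSucc]
      exact Nat.mod_eq_of_lt (by omega)
    have e1 : (if h : ((k.castSucc : Fin (m+1)) : ℕ) < m then
        v ⟨n + ((k.castSucc : Fin (m+1)) : ℕ), by omega⟩ else v ⟨0, by omega⟩)
        = v (Fin.natAdd n k) := by
      rw [dif_pos (by simpa using hk)]
      congr 1
    have e2 : (if h : ((finRotate (m+1) k.castSucc : Fin (m+1)) : ℕ) < m then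
        v ⟨n + ((finRotate (m+1) k.castSucc : Fin (m+1)) : ℕ), by omega⟩ else v ⟨0, by omega⟩)
        = v (finRotate (n + m) (Fin.natAdd n k)) := by
      by_cases hlt : k.val + 1 < m
      · rw [dif_pos (by rw [hrot]; exact hlt)]
        refine congrArg v (Fin.ext ?_)
        simp only [hrot, finRotate_val (show 0 < n + m by omega), Fin.coe_natAdd]
        rw [Nat.mod_eq_of_lt (by omega)]
        omega
      · rw [dif_neg (by rw [hrot]; omega)]
        refine congrArg v (Fin.ext ?_)
        simp only [finRotate_val (show 0 < n + m by omega), Fin.coe_natAdd]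
        have : n + k.val + 1 = n + m := by omega
        simp [this]
    rw [Fin.append_right, Fin.snoc_castSucc, e1, e2]
  rw [Finset.sum_congr rfl (fun k _ => hS1 k), Finset.sum_congr rfl (fun k _ => hS2 k)]
  simp only [Fin.snoc_last, Pi.zero_apply, zero_add]
  have hA : v (Fin.castLE (show n + 1 ≤ n + m by omega) (Fin.last n)) = v ⟨n, by omega⟩ := by
    congr 1
  have hArot : v (Fin.castLE (show n + 1 ≤ n + m by omega) (finRotate (n+1) (Fin.last n)))
      = v ⟨0, by omega⟩ := by
    refine congrArg v (Fin.ext ?_)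
    simp [finRotate_val (show 0 < n + 1 by omega)]
  have hB : (if h : ((Fin.last m : Fin (m+1)) : ℕ) < m then
      v ⟨n + ((Fin.last m : Fin (m+1)) : ℕ), by omega⟩ else v ⟨0, by omega⟩)
      = v ⟨0, by omega⟩ := by
    rw [dif_neg (by simp)]
  have hBrot : (if h : ((finRotate (m+1) (Fin.last m) : Fin (m+1)) : ℕ) < m then
      v ⟨n + ((finRotate (m+1) (Fin.last m) : Fin (m+1)) : ℕ), by omega⟩ else v ⟨0, by omega⟩)
      = v ⟨n, by omega⟩ := by
    have : ((finRotate (m+1) (Fin.last m) : Fin (m+1)) : ℕ) = 0 := by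
      rw [finRotate_val (by omega)]; simp
    rw [dif_pos (by omega)]
    refine congrArg v (Fin.ext ?_)
    simp [this]
  rw [hA, hArot, hB, hBrot]
  have hskew := inner_I_skew (v ⟨n, by omega⟩) (v ⟨0, by omega⟩)
  linarith [hskew]
end
end

section
/- For every t ∈ (−1/2, 1/2) and every n ≥ 1, the function q_t(w) := −tan(πt)·‖w‖² on ℂ^n is an elementary generating function of the rotation g_t(z) := e^{−2iπt}·z; that is, the map z ↦ (z + e^{−2iπt}z)/2 is a bijection of ℂ^n and ∇q_t((z + e^{−2iπt}z)/2) = i·(z − e^{−2iπt}z) for all z ∈ ℂ^n. -/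
noncomputable section
open scoped RealInnerProductSpace
open Complex Function Real

/-- the rotation g_t(z) := e^{−2iπt}·z. -/
def gRot {n : ℕ} (t : ℝ) : Cd n → Cd n :=
  fun z => Complex.exp (((-(2 * π * t) : ℝ) : ℂ) * Complex.I) • z

/-- q_t(w) := −tan(πt)·‖w‖². -/
def qGen {n : ℕ} (t : ℝ) : Cd n → ℝ :=
  fun w => -Real.tan (π * t) * ‖w‖ ^ 2


/- Writing `e = exp (-2πit)`, both `g_t` and `ψ_{g_t}` are multiplications by the scalars `e` and
`(1 + e)/2`, while `∇(c‖w‖²) = 2c w`. So `c‖w‖²` generates `g_t` exactly when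
`c (1 + e) = i (1 - e)`, and for `c = -tan(πt)` this is a trigonometric identity valid as long
as `cos(πt) ≠ 0`. The identity also forces `1 + e ≠ 0`, which makes `ψ_{g_t}` bijective. -/

theorem hasGradientAt_const_mul_norm_sq {F : Type*} [NormedAddCommGroup F]
    [InnerProductSpace ℝ F] [CompleteSpace F] (c : ℝ) (x : F) :
    HasGradientAt (fun w : F => c * ‖w‖ ^ 2) ((2 * c) • x) x := by
  rw [hasGradientAt_iff_hasFDerivAt]
  refine ((hasStrictFDerivAt_norm_sq x).hasFDerivAt.const_mul c).congr_fderiv ?_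
  ext y
  simp only [smul_apply, coe_innerSL_apply, nsmul_eq_mul, Nat.cast_ofNat, smul_eq_mul, map_smul,
    InnerProductSpace.toDual_apply_apply]
  ring

theorem psiMap_smul {d : ℕ} (e : ℂ) :
    psiMap (fun z : Cd d => e • z) = fun z => ((1 + e) / 2) • z := by
  funext z
  rw [psiMap, ← Complex.coe_smul, show z + e • z = (1 + e) • z by rw [add_smul, one_smul],
    smul_smul]
  congr 1
  push_cast
  ring

theorem isElemGF_smul_const_mul_norm_sq {d : ℕ} {e : ℂ} {c : ℝ}
    (h : (c : ℂ) * (1 + e) = I * (1 - e)) :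
    IsElemGF (fun z : Cd d => e • z) (fun w => c * ‖w‖ ^ 2) := by
  have he : (1 + e) / 2 ≠ 0 := by
    intro h0
    obtain rfl : e = -1 := by linear_combination 2 * h0
    norm_num at h
  refine ⟨psiMap_smul (d := d) e ▸ (Ne.isUnit he).smul_bijective, fun z => ?_⟩
  rw [psiMap_smul, (hasGradientAt_const_mul_norm_sq c _).gradient, ← Complex.coe_smul, smul_smul,
    show z - e • z = (1 - e) • z by rw [sub_smul, one_smul], smul_smul]
  congr 1
  push_cast
  linear_combination h

theorem neg_tan_mul_one_add_exp {θ : ℂ} (h : cos θ ≠ 0) :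
    -tan θ * (1 + exp (-(2 * θ) * I)) = I * (1 - exp (-(2 * θ) * I)) := by
  have hsq : exp (-(2 * θ) * I) = exp (-θ * I) ^ 2 := by
    rw [← Complex.exp_nat_mul]; ring_nf
  have hinv : exp (θ * I) * exp (-θ * I) = 1 := by
    rw [← Complex.exp_add]; ring_nf; exact Complex.exp_zero
  have hcos := two_cos θ
  have hsin := two_sin θ
  rw [Complex.tan_eq_sin_div_cos, hsq]
  generalize exp (θ * I) = u at *
  generalize exp (-θ * I) = v at *
  field_simp
  linear_combination (-(1 + v ^ 2) / 2) * hsin - (I * (1 - v ^ 2) / 2) * hcos + I * v * hinv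

theorem stmt9_general (n : ℕ) (t : ℝ)
    (ht : t ∈ Set.Ioo (-(1 / 2) : ℝ) (1 / 2)) :
    IsElemGF (gRot (n := n) t) (qGen t) := by
  have hcos : Real.cos (π * t) ≠ 0 :=
    (Real.cos_pos_of_mem_Ioo ⟨by nlinarith [ht.1, pi_pos], by nlinarith [ht.2, pi_pos]⟩).ne'
  refine isElemGF_smul_const_mul_norm_sq ?_
  have key := neg_tan_mul_one_add_exp (θ := π * t) (by exact_mod_cast hcos)
  push_cast
  convert key using 4 <;> ring

theorem stmt9 (n : ℕ) (hn : 1 ≤ n) (t : ℝ)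
    (ht : t ∈ Set.Ioo (-(1 / 2) : ℝ) (1 / 2)) :
    IsElemGF (gRot (n := n) t) (qGen t) :=
  stmt9_general n t ht
end
end

section
/- Let d ≥ 0, m' ≥ 2 even, and let σ = (σ_1,…,σ_{m'}) be a tuple of bijections of ℂ^{d+1} with σ_k(0) = 0, each with an elementary generating function. Let m ≥ 5 be odd, and for real t with |t|/(m−1) < 1/2 set δ_t := (g_{t/(m−1)},…,g_{t/(m−1)}, id) (m entries) and F_t := F_{(σ,δ_t)} : (ℂ^{d+1})^{m'+m} → ℝ. Then: (i) for every v ∈ (ℂ^{d+1})^{m'+m}, the derivative ∂_t F_t(v) of t ↦ F_t(v) is ≤ 0; (ii) if v ≠ 0 and ∇_{v_k}F_t(v) = 0 for every k ∈ {2,…,m'+m}, then ∂_t F_t(v) < 0. -/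
set_option maxHeartbeats 1000000

noncomputable section
open scoped RealInnerProductSpace
open Complex Function Real

/-- the elementary generating functions of the m-tuple δ_t = (g_{t/(m−1)},…,g_{t/(m−1)},id):
q_{t/(m−1)} on the first m−1 entries and 0 on the last one. -/
def dgens (d m : ℕ) (t : ℝ) : Fin m → (Cd (d + 1) → ℝ) :=
  fun k => if (k : ℕ) < m - 1
    then (fun w => -Real.tan (π * t / ((m : ℝ) - 1)) * ‖w‖ ^ 2)
    else 0

/-! ### Auxiliary lemmas -/

open InnerProductSpace

lemma aux_inner_I_right {D : ℕ} (a u : Cd D) : ⟪a, Complex.I • u⟫ = ⟪-(Complex.I • a), u⟫ := by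
  simp only [PiLp.inner_apply, PiLp.smul_apply, PiLp.neg_apply, smul_eq_mul, Complex.inner]
  congr 1; funext i; simp [Complex.mul_re]; ring

lemma aux_I_smul_inj {D : ℕ} {a b : Cd D} (h : Complex.I • a = Complex.I • b) : a = b :=
  smul_right_injective _ Complex.I_ne_zero h

lemma aux_rotval {n : ℕ} (h : 2 ≤ n) (k : Fin n) : ((finRotate n k : Fin n) : ℕ) = (k.val + 1) % n := by
  obtain ⟨n', rfl⟩ : ∃ n', n = n' + 1 := ⟨n - 1, by omega⟩
  rw [finRotate_succ_apply, Fin.add_def]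
  simp [Nat.mod_eq_of_lt (show 1 < n' + 1 by omega)]

lemma aux_rot_ne {n : ℕ} (h : 2 ≤ n) (k : Fin n) : finRotate n k ≠ k := by
  intro he
  have hv := congrArg Fin.val he
  rw [aux_rotval h] at hv
  have hlt := k.isLt
  by_cases h' : k.val + 1 < n
  · rw [Nat.mod_eq_of_lt h'] at hv; omega
  · have he2 : k.val + 1 = n := by omega
    rw [he2, Nat.mod_self] at hv; omega

lemma aux_hasGradientAt_q {D : ℕ} (c : ℝ) : HasGradientAt (fun w : Cd D => c * ‖w‖^2) 0 0 := by
  have h := ((hasFDerivAt_id (0 : Cd D)).inner ℝ (hasFDerivAt_id (0 : Cd D))).const_mul c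
  simp only [id] at h
  have e1 : (fun w : Cd D => c * ⟪w, w⟫) = fun w : Cd D => c * ‖w‖^2 := by
    funext w; rw [real_inner_self_eq_norm_sq]
  rw [e1] at h
  have e2 : c • ((fderivInnerCLM ℝ ((0:Cd D), (0:Cd D))).comp
      ((ContinuousLinearMap.id ℝ (Cd D)).prod (ContinuousLinearMap.id ℝ (Cd D))))
      = toDual ℝ (Cd D) 0 := by
    ext w; simp [fderivInnerCLM_apply]
  rw [hasGradientAt_iff_hasFDerivAt, ← e2]
  exact h

lemma aux_grad_q_zero {D : ℕ} (c : ℝ) : gradient (fun w : Cd D => c * ‖w‖^2) 0 = 0 :=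
  (aux_hasGradientAt_q c).gradient

lemma aux_diff_q {D : ℕ} (c : ℝ) : Differentiable ℝ (fun w : Cd D => c * ‖w‖^2) :=
  ((contDiff_norm_sq ℝ (E := Cd D) (n := 1)).differentiable one_ne_zero).const_mul c

lemma mid_eq_zero {D : ℕ} {σ : Cd D → Cd D} {f : Cd D → ℝ}
    (hb : Function.Bijective σ) (h0 : σ 0 = 0) (hgf : IsElemGF σ f) {p : Cd D}
    (h : gradient f p = Complex.I • ((2:ℝ) • p)) : p = 0 := by
  obtain ⟨z, hz⟩ := hgf.1.2 p
  rw [← hz, hgf.2 z] at h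
  have h2 : (2:ℝ) • psiMap σ z = z + σ z := by rw [psiMap, smul_smul]; norm_num
  rw [h2] at h
  have h3 : z - σ z = z + σ z := smul_right_injective _ Complex.I_ne_zero h
  have h6 : σ z = 0 := by
    have h7 : (2:ℝ) • σ z = 0 := by
      have hzz : z - σ z - (z + σ z) = 0 := by rw [h3]; simp
      rw [two_smul]
      calc σ z + σ z = -(z - σ z - (z + σ z)) := by abel
      _ = 0 := by rw [hzz, neg_zero]
    have := congrArg (fun x => (2⁻¹:ℝ) • x) h7
    simpa [smul_smul] using this
  have hz0 : z = 0 := hb.1 (h6.trans h0.symm)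
  rw [← hz, hz0, psiMap, h0]; simp

lemma pgrad_Ftuple_s11 {D n : ℕ} (fs : Fin n → (Cd D → ℝ)) (v : Fin n → Cd D) (j : Fin n)
    (hne : finRotate n j ≠ j)
    (h1 : DifferentiableAt ℝ (fs j) ((2⁻¹:ℝ) • (v j + v (finRotate n j))))
    (h2 : DifferentiableAt ℝ (fs (finRotate n j))
      ((2⁻¹:ℝ) • (v (finRotate n j) + v (finRotate n (finRotate n j))))) :
    pgrad (Ftuple fs) (finRotate n j) v =
      (2⁻¹:ℝ) • gradient (fs j) ((2⁻¹:ℝ) • (v j + v (finRotate n j)))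
      + (2⁻¹:ℝ) • gradient (fs (finRotate n j))
          ((2⁻¹:ℝ) • (v (finRotate n j) + v (finRotate n (finRotate n j))))
      + (2⁻¹:ℝ) • (Complex.I • v (finRotate n (finRotate n j)))
      - (2⁻¹:ℝ) • (Complex.I • v j) := by
  set k := finRotate n j with hk
  have hjk : j ≠ k := fun h => hne (by rw [← h] at hk; exact hk.symm ▸ rfl)
  have hk2 : finRotate n k ≠ k := fun h => hne ((finRotate n).injective h)
  set C : ℝ := ∑ i ∈ (Finset.univ \ {j, k}),
      (fs i ((2⁻¹:ℝ) • (v i + v (finRotate n i)))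
        + (2⁻¹:ℝ) * ⟪v i, Complex.I • v (finRotate n i)⟫) with hC
  have hupdate : (fun u => Ftuple fs (Function.update v k u)) = fun u => C +
      ((fs j ((2⁻¹:ℝ) • (v j + u)) + (2⁻¹:ℝ) * ⟪v j, Complex.I • u⟫)
       + (fs k ((2⁻¹:ℝ) • (u + v (finRotate n k)))
          + (2⁻¹:ℝ) * ⟪u, Complex.I • v (finRotate n k)⟫)) := by
    funext u
    rw [Ftuple, ← Finset.sum_sdiff (Finset.subset_univ ({j, k} : Finset (Fin n)))]
    congr 1
    · refine Finset.sum_congr rfl fun i hi => ?_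
      simp only [Finset.mem_sdiff, Finset.mem_insert, Finset.mem_singleton] at hi
      have hik : i ≠ k := fun h => hi.2 (Or.inr h)
      have hrik : finRotate n i ≠ k := fun h => hi.2 (Or.inl ((finRotate n).injective (h.trans hk)))
      rw [Function.update_of_ne hik, Function.update_of_ne hrik]
    · rw [Finset.sum_pair hjk]
      rw [Function.update_of_ne hjk, Function.update_self, Function.update_of_ne hk2]
  rw [pgrad, hupdate]
  set p1 := (2⁻¹:ℝ) • (v j + v k) with hp1
  set p2 := (2⁻¹:ℝ) • (v k + v (finRotate n k)) with hp2
  have A1 : HasFDerivAt (fun u : Cd D => (2⁻¹:ℝ) • (v j + u))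
      ((2⁻¹:ℝ) • ContinuousLinearMap.id ℝ (Cd D)) (v k) :=
    ((hasFDerivAt_id (v k)).const_add (v j)).const_smul (2⁻¹:ℝ)
  have A2 : HasFDerivAt (fun u : Cd D => (2⁻¹:ℝ) • (u + v (finRotate n k)))
      ((2⁻¹:ℝ) • ContinuousLinearMap.id ℝ (Cd D)) (v k) :=
    ((hasFDerivAt_id (v k)).add_const (v (finRotate n k))).const_smul (2⁻¹:ℝ)
  have B1 : HasFDerivAt (fs j) (toDual ℝ (Cd D) (gradient (fs j) p1)) p1 :=
    h1.hasGradientAt.hasFDerivAt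
  have B2 : HasFDerivAt (fs k) (toDual ℝ (Cd D) (gradient (fs k) p2)) p2 :=
    h2.hasGradientAt.hasFDerivAt
  have C1 : HasFDerivAt (fun u : Cd D => fs j ((2⁻¹:ℝ) • (v j + u)))
      ((toDual ℝ (Cd D) (gradient (fs j) p1)).comp ((2⁻¹:ℝ) • ContinuousLinearMap.id ℝ (Cd D)))
      (v k) := B1.comp (v k) A1
  have C2 : HasFDerivAt (fun u : Cd D => fs k ((2⁻¹:ℝ) • (u + v (finRotate n k))))
      ((toDual ℝ (Cd D) (gradient (fs k) p2)).comp ((2⁻¹:ℝ) • ContinuousLinearMap.id ℝ (Cd D)))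
      (v k) := B2.comp (v k) A2
  have D1 : HasFDerivAt (fun u : Cd D => (2⁻¹:ℝ) * ⟪v j, Complex.I • u⟫)
      ((2⁻¹:ℝ) • innerSL ℝ (-(Complex.I • v j))) (v k) := by
    have e : (fun u : Cd D => (2⁻¹:ℝ) * ⟪v j, Complex.I • u⟫)
        = fun u => ((2⁻¹:ℝ) • innerSL ℝ (-(Complex.I • v j))) u := by
      funext u; rw [aux_inner_I_right]
      simp only [ContinuousLinearMap.smul_apply, innerSL_apply_apply, smul_eq_mul]
    rw [e]; exact ((2⁻¹:ℝ) • innerSL ℝ (-(Complex.I • v j))).hasFDerivAt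
  have D2 : HasFDerivAt (fun u : Cd D => (2⁻¹:ℝ) * ⟪u, Complex.I • v (finRotate n k)⟫)
      ((2⁻¹:ℝ) • innerSL ℝ (Complex.I • v (finRotate n k))) (v k) := by
    have e : (fun u : Cd D => (2⁻¹:ℝ) * ⟪u, Complex.I • v (finRotate n k)⟫)
        = fun u => ((2⁻¹:ℝ) • innerSL ℝ (Complex.I • v (finRotate n k))) u := by
      funext u; rw [real_inner_comm]
      simp only [ContinuousLinearMap.smul_apply, innerSL_apply_apply, smul_eq_mul]
    rw [e]; exact ((2⁻¹:ℝ) • innerSL ℝ (Complex.I • v (finRotate n k))).hasFDerivAt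
  have htot := ((C1.add D1).add (C2.add D2)).const_add C
  have hL : ((toDual ℝ (Cd D) (gradient (fs j) p1)).comp ((2⁻¹:ℝ) • ContinuousLinearMap.id ℝ (Cd D))
        + (2⁻¹:ℝ) • innerSL ℝ (-(Complex.I • v j)))
      + ((toDual ℝ (Cd D) (gradient (fs k) p2)).comp ((2⁻¹:ℝ) • ContinuousLinearMap.id ℝ (Cd D))
        + (2⁻¹:ℝ) • innerSL ℝ (Complex.I • v (finRotate n k)))
      = toDual ℝ (Cd D) ((2⁻¹:ℝ) • gradient (fs j) p1 + (2⁻¹:ℝ) • gradient (fs k) p2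
          + (2⁻¹:ℝ) • (Complex.I • v (finRotate n k)) - (2⁻¹:ℝ) • (Complex.I • v j)) := by
    ext w
    simp only [ContinuousLinearMap.add_apply, ContinuousLinearMap.coe_comp',
      Function.comp_apply, ContinuousLinearMap.smul_apply, ContinuousLinearMap.coe_id',
      id_eq, innerSL_apply_apply, toDual_apply_apply, inner_add_left, inner_sub_left,
      real_inner_smul_left, real_inner_smul_right, inner_neg_left, smul_eq_mul]
    ring
  rw [hL] at htot
  exact HasGradientAt.gradient htot

/-- If the pgrad at `finRotate n j` vanishes, the gradient of the next generating function
at its midpoint vanishes, and the next midpoint relation holds, then the gradient of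
`fs j` at its midpoint equals `I • (2 • mid)`. -/
lemma aux_step {D n : ℕ} (fs : Fin n → (Cd D → ℝ)) (v : Fin n → Cd D) (j : Fin n)
    (hn : 2 ≤ n)
    (hd1 : Differentiable ℝ (fs j)) (hd2 : Differentiable ℝ (fs (finRotate n j)))
    (hcrit : pgrad (Ftuple fs) (finRotate n j) v = 0)
    (hg2 : gradient (fs (finRotate n j))
      ((2⁻¹:ℝ) • (v (finRotate n j) + v (finRotate n (finRotate n j)))) = 0)
    (hvv : v (finRotate n (finRotate n j)) = - v (finRotate n j)) :
    gradient (fs j) ((2⁻¹:ℝ) • (v j + v (finRotate n j)))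
      = Complex.I • ((2:ℝ) • ((2⁻¹:ℝ) • (v j + v (finRotate n j)))) := by
  have heq := (pgrad_Ftuple_s11 fs v j (aux_rot_ne hn j) (hd1 _) (hd2 _)).symm.trans hcrit
  rw [hg2, hvv, smul_neg] at heq
  set g := gradient (fs j) ((2⁻¹:ℝ) • (v j + v (finRotate n j))) with hgdef
  linear_combination (norm := module) (2:ℝ) • heq

/-- If both gradients vanish, the two outer vertices agree. -/
lemma aux_wrap {D n : ℕ} (fs : Fin n → (Cd D → ℝ)) (v : Fin n → Cd D) (j : Fin n)
    (hn : 2 ≤ n)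
    (hd1 : Differentiable ℝ (fs j)) (hd2 : Differentiable ℝ (fs (finRotate n j)))
    (hcrit : pgrad (Ftuple fs) (finRotate n j) v = 0)
    (hg1 : gradient (fs j) ((2⁻¹:ℝ) • (v j + v (finRotate n j))) = 0)
    (hg2 : gradient (fs (finRotate n j))
      ((2⁻¹:ℝ) • (v (finRotate n j) + v (finRotate n (finRotate n j)))) = 0) :
    v (finRotate n (finRotate n j)) = v j := by
  have heq := (pgrad_Ftuple_s11 fs v j (aux_rot_ne hn j) (hd1 _) (hd2 _)).symm.trans hcrit
  rw [hg1, hg2] at heq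
  have : Complex.I • v (finRotate n (finRotate n j)) = Complex.I • v j := by
    linear_combination (norm := module) (2:ℝ) • heq
  exact aux_I_smul_inj this

lemma aux_mid_zero_neg {D : ℕ} {x y : Cd D} (h : (2⁻¹:ℝ) • (x + y) = 0) : y = -x := by
  have h2 := congrArg (fun z : Cd D => (2:ℝ) • z) h
  simp only [smul_smul, smul_zero] at h2
  rw [show ((2:ℝ) * 2⁻¹) = 1 by norm_num, one_smul] at h2
  exact eq_neg_of_add_eq_zero_right h2

lemma aux_self_neg {D : ℕ} {x : Cd D} (h : x = -x) : x = 0 := by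
  have h2 : (2:ℝ) • x = 0 := by
    rw [two_smul]; nth_rewrite 2 [h]; abel
  have := congrArg (fun z : Cd D => (2⁻¹:ℝ) • z) h2
  simpa [smul_smul] using this

/-- the sum of squared norms of the midpoints in the rotation block. -/
def auxS (d m' m : ℕ) (v : Fin (m' + m) → Cd (d + 1)) : ℝ :=
  ∑ jj : Fin m, (if (jj : ℕ) < m - 1
    then ‖(2⁻¹:ℝ) • (v (Fin.natAdd m' jj) + v (finRotate (m'+m) (Fin.natAdd m' jj)))‖^2
    else 0)

lemma auxS_nonneg (d m' m : ℕ) (v : Fin (m' + m) → Cd (d + 1)) : 0 ≤ auxS d m' m v :=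
  Finset.sum_nonneg fun jj _ => by split <;> positivity

lemma aux_Ftuple_eq {d m' m : ℕ} (f : Fin m' → (Cd (d+1) → ℝ)) (v : Fin (m'+m) → Cd (d+1))
    (s : ℝ) :
    Ftuple (Fin.append f (dgens d m s)) v
      = Ftuple (Fin.append f (dgens d m 0)) v
        - Real.tan (π * s / ((m:ℝ) - 1)) * auxS d m' m v := by
  rw [Ftuple, Ftuple, auxS, Fin.sum_univ_add, Fin.sum_univ_add]
  simp only [Fin.append_left, Fin.append_right]
  rw [Finset.mul_sum, add_sub_assoc]
  congr 1
  rw [← Finset.sum_sub_distrib]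
  refine Finset.sum_congr rfl fun jj _ => ?_
  by_cases h : (jj : ℕ) < m - 1
  · simp only [dgens, if_pos h]
    rw [mul_zero, zero_div, Real.tan_zero]
    ring
  · simp only [dgens, if_neg h]
    simp

theorem stmt11 (d m' m : ℕ) (hm' : 2 ≤ m') (hm'even : Even m')
    (hm : 5 ≤ m) (hmodd : Odd m)
    (σ : Fin m' → (Cd (d + 1) → Cd (d + 1)))
    (hσ0 : ∀ k, σ k 0 = 0)
    (hbij : ∀ k, Function.Bijective (σ k))
    (f : Fin m' → (Cd (d + 1) → ℝ))
    (hsm : ∀ k, ContDiff ℝ (⊤ : ℕ∞) (f k))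
    (hgf : ∀ k, IsElemGF (σ k) (f k))
    (t : ℝ) (ht : |t| / ((m : ℝ) - 1) < 1 / 2) :
    -- (i)
    (∀ v : Fin (m' + m) → Cd (d + 1),
      deriv (fun s : ℝ => Ftuple (Fin.append f (dgens d m s)) v) t ≤ 0) ∧
    -- (ii)
    (∀ v : Fin (m' + m) → Cd (d + 1), v ≠ 0 →
      (∀ k : Fin (m' + m), k ≠ ⟨0, by omega⟩ →
        pgrad (Ftuple (Fin.append f (dgens d m t))) k v = 0) →
      deriv (fun s : ℝ => Ftuple (Fin.append f (dgens d m s)) v) t < 0) := by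
  have h5R : (5:ℝ) ≤ (m:ℝ) := by exact_mod_cast hm
  have hm1 : (0:ℝ) < (m:ℝ) - 1 := by linarith
  have hcos : Real.cos (π * t / ((m:ℝ) - 1)) ≠ 0 := by
    have habs : |π * t / ((m:ℝ) - 1)| < π / 2 := by
      rw [abs_div, abs_mul, abs_of_pos Real.pi_pos, abs_of_pos hm1]
      calc π * |t| / ((m:ℝ) - 1) = π * (|t| / ((m:ℝ) - 1)) := by ring
        _ < π * (1/2) := by exact mul_lt_mul_of_pos_left ht Real.pi_pos
        _ = π / 2 := by ring
    exact ne_of_gt (Real.cos_pos_of_mem_Ioo ⟨(abs_lt.mp habs).1, (abs_lt.mp habs).2⟩)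
  have htan : HasDerivAt (fun s : ℝ => Real.tan (π * s / ((m:ℝ) - 1)))
      (π / ((m:ℝ) - 1) * (1 / Real.cos (π * t / ((m:ℝ) - 1)) ^ 2)) t := by
    have h1 : HasDerivAt (fun s : ℝ => π * s / ((m:ℝ) - 1)) (π / ((m:ℝ) - 1)) t := by
      have := ((hasDerivAt_id t).const_mul π).div_const ((m:ℝ) - 1)
      simpa using this
    have h2 := Real.hasDerivAt_tan hcos
    have := h2.comp t h1
    simpa [mul_comm, Function.comp_def] using this
  have hD : ∀ v : Fin (m' + m) → Cd (d + 1),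
      HasDerivAt (fun s : ℝ => Ftuple (Fin.append f (dgens d m s)) v)
        (-(π / ((m:ℝ) - 1) * (1 / Real.cos (π * t / ((m:ℝ) - 1)) ^ 2) * auxS d m' m v)) t := by
    intro v
    have he : (fun s : ℝ => Ftuple (Fin.append f (dgens d m s)) v)
        = fun s => Ftuple (Fin.append f (dgens d m 0)) v
          - Real.tan (π * s / ((m:ℝ) - 1)) * auxS d m' m v := funext fun s => aux_Ftuple_eq f v s
    rw [he]
    exact (htan.mul_const (auxS d m' m v)).const_sub (Ftuple (Fin.append f (dgens d m 0)) v)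
  have hfac : 0 < π / ((m:ℝ) - 1) * (1 / Real.cos (π * t / ((m:ℝ) - 1)) ^ 2) := by
    apply mul_pos (div_pos Real.pi_pos hm1)
    exact one_div_pos.mpr (pow_two_pos_of_ne_zero hcos)
  constructor
  · intro v
    rw [(hD v).deriv]
    exact neg_nonpos.mpr (mul_nonneg hfac.le (auxS_nonneg d m' m v))
  · intro v hv hcrit
    rw [(hD v).deriv]
    rw [neg_lt_zero]
    apply mul_pos hfac
    rcases (auxS_nonneg d m' m v).lt_or_eq with h | h
    · exact h
    exfalso
    apply hv
    have hS0 : auxS d m' m v = 0 := h.symm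
    clear h ht htan hD hfac hcos
    -- index helpers
    have hn2 : 2 ≤ m' + m := by omega
    have hrot' : ∀ (a b : ℕ) (ha : a < m' + m) (hb : b < m' + m) (hab : a + 1 = b),
        finRotate (m'+m) ⟨a, ha⟩ = ⟨b, hb⟩ := by
      intro a b ha hb hab
      apply Fin.ext
      rw [aux_rotval hn2]
      show (a + 1) % (m' + m) = b
      rw [hab, Nat.mod_eq_of_lt hb]
    have hrot0 : ∀ (a : ℕ) (ha : a < m' + m) (hab : a + 1 = m' + m),
        finRotate (m'+m) ⟨a, ha⟩ = ⟨0, by omega⟩ := by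
      intro a ha hab
      apply Fin.ext
      rw [aux_rotval hn2]
      show (a + 1) % (m' + m) = 0
      rw [hab, Nat.mod_self]
    -- append helpers
    have happL : ∀ (k : Fin (m'+m)) (hk : (k:ℕ) < m'),
        Fin.append f (dgens d m t) k = f ⟨(k:ℕ), hk⟩ := by
      intro k hk
      have he : k = Fin.castAdd m ⟨(k:ℕ), hk⟩ := Fin.ext rfl
      have h2 := Fin.append_left f (dgens d m t) ⟨(k:ℕ), hk⟩
      rw [← he] at h2
      exact h2
    have happR : ∀ (k : Fin (m'+m)) (b : ℕ) (hb : b < m) (hkb : (k:ℕ) = m' + b),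
        Fin.append f (dgens d m t) k = dgens d m t ⟨b, hb⟩ := by
      intro k b hb hkb
      have he : k = Fin.natAdd m' ⟨b, hb⟩ := Fin.ext hkb
      have h2 := Fin.append_right f (dgens d m t) ⟨b, hb⟩
      rw [← he] at h2
      exact h2
    have hdiffall : ∀ k : Fin (m' + m), Differentiable ℝ (Fin.append f (dgens d m t) k) := by
      intro k
      induction k using Fin.addCases with
      | left i =>
        rw [Fin.append_left]
        exact (hsm i).differentiable (by simp)
      | right j =>
        rw [Fin.append_right]
        by_cases hj : (j : ℕ) < m - 1
        · simp only [dgens, if_pos hj]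
          exact aux_diff_q _
        · simp only [dgens, if_neg hj]
          exact differentiable_const 0
    have hqgrad : ∀ (b : ℕ) (hb : b < m - 1),
        gradient (dgens d m t ⟨b, by omega⟩) (0 : Cd (d+1)) = 0 := by
      intro b hb
      have he : dgens d m t ⟨b, by omega⟩
          = fun w : Cd (d+1) => -Real.tan (π * t / ((m:ℝ) - 1)) * ‖w‖^2 := by
        simp [dgens, hb]
      rw [he]
      exact aux_grad_q_zero _
    have hzgrad : ∀ x : Cd (d+1), gradient (dgens d m t ⟨m-1, by omega⟩) x = 0 := by
      intro x
      have he : dgens d m t ⟨m-1, by omega⟩ = fun _ : Cd (d+1) => (0:ℝ) := by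
        funext w; simp [dgens]
      rw [he]
      exact gradient_const _ _
    have hgradf0 : ∀ i : Fin m', gradient (f i) 0 = 0 := by
      intro i
      have h := (hgf i).2 0
      have he : psiMap (σ i) 0 = 0 := by rw [psiMap]; simp [hσ0 i]
      rw [he, hσ0 i] at h
      simpa using h
    -- the δ-block midpoints vanish
    have hmidδ : ∀ (a b : ℕ) (ha : m' ≤ a) (hab : a + 1 = b) (hb : b < m' + m),
        (2⁻¹:ℝ) • (v ⟨a, by omega⟩ + v ⟨b, hb⟩) = 0 := by
      intro a b ha hab hb
      have hjj : a - m' < m := by omega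
      have hterm := (Finset.sum_eq_zero_iff_of_nonneg
        (fun i (_ : i ∈ Finset.univ) => by split <;> positivity)).mp hS0
        ⟨a - m', hjj⟩ (Finset.mem_univ _)
      rw [if_pos (show ((⟨a - m', hjj⟩ : Fin m) : ℕ) < m - 1 by simp; omega)] at hterm
      have hna : Fin.natAdd m' (⟨a - m', hjj⟩ : Fin m) = (⟨a, by omega⟩ : Fin (m'+m)) :=
        Fin.ext (by simp; omega)
      rw [hna, hrot' a b (by omega) hb hab] at hterm
      have hnorm : ‖(2⁻¹:ℝ) • (v ⟨a, by omega⟩ + v ⟨b, hb⟩)‖ = 0 :=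
        (pow_eq_zero_iff two_ne_zero).mp hterm
      exact norm_eq_zero.mp hnorm
    -- one step of the σ-block descent
    have hstep : ∀ (a b c : Fin (m'+m)) (ha : (a:ℕ) < m')
        (hb : finRotate (m'+m) a = b) (hc : finRotate (m'+m) b = c)
        (hbne : b ≠ (⟨0, by omega⟩ : Fin (m'+m))),
        gradient (Fin.append f (dgens d m t) b) ((2⁻¹:ℝ) • (v b + v c)) = 0 →
        v c = - v b →
        (2⁻¹:ℝ) • (v a + v b) = 0 := by
      intro a b c ha hb hc hbne hg2 hvv
      have hcrit' : pgrad (Ftuple (Fin.append f (dgens d m t))) (finRotate (m'+m) a) v = 0 := by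
        rw [hb]; exact hcrit b hbne
      have hg2' : gradient (Fin.append f (dgens d m t) (finRotate (m'+m) a))
          ((2⁻¹:ℝ) • (v (finRotate (m'+m) a)
            + v (finRotate (m'+m) (finRotate (m'+m) a)))) = 0 := by
        rw [hb, hc]; exact hg2
      have hvv' : v (finRotate (m'+m) (finRotate (m'+m) a))
          = - v (finRotate (m'+m) a) := by
        rw [hb, hc]; exact hvv
      have hg := aux_step (Fin.append f (dgens d m t)) v a hn2
        (hdiffall _) (hdiffall _) hcrit' hg2' hvv'
      rw [hb, happL a ha] at hg
      exact mid_eq_zero (hbij ⟨(a:ℕ), ha⟩) (hσ0 _) (hgf _) hg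
    -- downward induction through the σ block
    have hmidσ : ∀ b : ℕ, b < m' →
        (2⁻¹:ℝ) • (v ⟨m'-1-b, by omega⟩ + v ⟨m'-b, by omega⟩) = 0 := by
      intro b
      induction b with
      | zero =>
        intro _
        refine hstep ⟨m'-1-0, by omega⟩ ⟨m'-0, by omega⟩ ⟨m'+1, by omega⟩
          (by show m'-1-0 < m'; omega)
          (hrot' _ _ _ _ (by omega)) (hrot' _ _ _ _ (by omega))
          (by simp [Fin.ext_iff]; omega) ?_ ?_
        · rw [happR _ 0 (by omega) (by show m'-0 = m'+0; omega)]
          rw [hmidδ (m'-0) (m'+1) (by omega) (by omega) (by omega)]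
          exact hqgrad 0 (by omega)
        · exact aux_mid_zero_neg (hmidδ (m'-0) (m'+1) (by omega) (by omega) (by omega))
      | succ b ih =>
        intro hb
        have hihb := ih (by omega)
        have e2 : (⟨m'-(b+1), by omega⟩ : Fin (m'+m)) = ⟨m'-1-b, by omega⟩ := by
          simp only [Fin.mk.injEq]; omega
        rw [e2]
        refine hstep ⟨m'-1-(b+1), by omega⟩ ⟨m'-1-b, by omega⟩ ⟨m'-b, by omega⟩
          (by show m'-1-(b+1) < m'; omega)
          (hrot' _ _ _ _ (by omega)) (hrot' _ _ _ _ (by omega))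
          (by simp [Fin.ext_iff]; omega) ?_ ?_
        · rw [happL _ (by show m'-1-b < m'; omega)]
          rw [hihb]
          exact hgradf0 _
        · exact aux_mid_zero_neg hihb
    -- full chain of sign alternation
    have hchain : ∀ (a : ℕ) (h1 : a + 1 < m' + m), v ⟨a+1, h1⟩ = - v ⟨a, by omega⟩ := by
      intro a h1
      by_cases ha : a < m'
      · have hh := hmidσ (m'-1-a) (by omega)
        have e1 : (⟨m'-1-(m'-1-a), by omega⟩ : Fin (m'+m)) = ⟨a, by omega⟩ := by
          simp only [Fin.mk.injEq]; omega
        have e2 : (⟨m'-(m'-1-a), by omega⟩ : Fin (m'+m)) = ⟨a+1, h1⟩ := by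
          simp only [Fin.mk.injEq]; omega
        rw [e1, e2] at hh
        exact aux_mid_zero_neg hh
      · exact aux_mid_zero_neg (hmidδ a (a+1) (by omega) rfl h1)
    have hsign : ∀ (a : ℕ) (h : a < m' + m), v ⟨a, h⟩ = ((-1:ℝ)^a) • v ⟨0, by omega⟩ := by
      intro a
      induction a with
      | zero => intro h; simp
      | succ a ih =>
        intro h
        rw [hchain a h, ih (by omega), pow_succ, mul_comm, mul_smul, neg_one_smul]
    -- the wrap-around equation
    have hwrap : v ⟨0, by omega⟩ = v ⟨m'+m-2, by omega⟩ := by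
      have hj : m' + m - 2 < m' + m := by omega
      have hrot1 : finRotate (m'+m) ⟨m'+m-2, hj⟩ = ⟨m'+m-1, by omega⟩ :=
        hrot' _ _ _ _ (by omega)
      have hrot2 : finRotate (m'+m) ⟨m'+m-1, by omega⟩ = ⟨0, by omega⟩ :=
        hrot0 _ _ (by omega)
      have hcrit' : pgrad (Ftuple (Fin.append f (dgens d m t)))
          (finRotate (m'+m) ⟨m'+m-2, hj⟩) v = 0 := by
        rw [hrot1]
        exact hcrit ⟨m'+m-1, by omega⟩ (by simp [Fin.ext_iff]; omega)
      have hg1 : gradient (Fin.append f (dgens d m t) ⟨m'+m-2, hj⟩)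
          ((2⁻¹:ℝ) • (v ⟨m'+m-2, hj⟩ + v (finRotate (m'+m) ⟨m'+m-2, hj⟩))) = 0 := by
        rw [hrot1]
        have s1 := happR (⟨m'+m-2, hj⟩ : Fin (m'+m)) (m-2) (by omega)
          (by show m'+m-2 = m'+(m-2); omega)
        have s2 : (2⁻¹:ℝ) • (v ⟨m'+m-2, hj⟩ + v ⟨m'+m-1, by omega⟩) = 0 :=
          hmidδ (m'+m-2) (m'+m-1) (by omega) (by omega) (by omega)
        exact (congrArg (fun g : Cd (d+1) → ℝ =>
            gradient g ((2⁻¹:ℝ) • (v ⟨m'+m-2, hj⟩ + v ⟨m'+m-1, by omega⟩))) s1).trans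
          ((congrArg (gradient (dgens d m t ⟨m-2, by omega⟩)) s2).trans (hqgrad (m-2) (by omega)))
      have hg2 : gradient (Fin.append f (dgens d m t) (finRotate (m'+m) ⟨m'+m-2, hj⟩))
          ((2⁻¹:ℝ) • (v (finRotate (m'+m) ⟨m'+m-2, hj⟩)
            + v (finRotate (m'+m) (finRotate (m'+m) ⟨m'+m-2, hj⟩)))) = 0 := by
        rw [hrot1, hrot2]
        have s1 := happR (⟨m'+m-1, by omega⟩ : Fin (m'+m)) (m-1) (by omega)
          (by show m'+m-1 = m'+(m-1); omega)
        exact (congrArg (fun g : Cd (d+1) → ℝ =>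
            gradient g ((2⁻¹:ℝ) • (v ⟨m'+m-1, by omega⟩ + v ⟨0, by omega⟩))) s1).trans
          (hzgrad _)
      have hw := aux_wrap (Fin.append f (dgens d m t)) v ⟨m'+m-2, hj⟩ hn2
        (hdiffall _) (hdiffall _) hcrit' hg1 hg2
      rw [hrot1, hrot2] at hw
      exact hw
    -- conclude v = 0
    have hodd : Odd (m' + m - 2) := by
      obtain ⟨p, hp⟩ := hm'even
      obtain ⟨q, hq⟩ := hmodd
      exact ⟨p + q - 1, by omega⟩
    have hv0 : v ⟨0, by omega⟩ = 0 := by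
      apply aux_self_neg
      calc v (⟨0, by omega⟩ : Fin (m'+m)) = v ⟨m'+m-2, by omega⟩ := hwrap
        _ = (-1:ℝ)^(m'+m-2) • v ⟨0, by omega⟩ := hsign _ (by omega)
        _ = - v ⟨0, by omega⟩ := by rw [hodd.neg_one_pow, neg_one_smul]
    funext k
    have hk := hsign k.val k.isLt
    rw [hv0, smul_zero] at hk
    rw [← Fin.eta k k.isLt]
    exact hk
end
end

section
/- Let m, n ∈ ℕ and A ⊆ ℂP^m (regarded inside ℂP^{m+n+1} via [a] ↦ [a:0]). Let E_A := (A*ℂP^n) ∖ ℂP^n = {[a:b] : a ≠ 0 and [a:0] ∈ A} and let p_A : E_A → {[a:0] : [a:0] ∈ A} be p_A([a:b]) := [a:0]. For i ∈ {0,…,m}, let U_i := {[a:b] ∈ ℂP^{m+n+1} : a_i ≠ 0}. Then p_A is well defined and continuous, p_A⁻¹({[a:0] ∈ A : a_i ≠ 0}) = E_A ∩ U_i, and the map [a:b] ↦ ([a:0], b/a_i) is a homeomorphism from E_A ∩ U_i onto {[a:0] ∈ A : a_i ≠ 0} × ℂ^{n+1} whose composition with the projection onto the first factor equals p_A. -/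
noncomputable section
open scoped LinearAlgebra.Projectivization
open Projectivization

/-- ℂ^{m+1} × ℂ^{n+1}, whose projectivization is ℂP^{m+n+1}. -/
abbrev V (m n : ℕ) : Type := (Fin (m + 1) → ℂ) × (Fin (n + 1) → ℂ)

/-- ℂP^{m+n+1}, as the projectivization of ℂ^{m+1} × ℂ^{n+1}. -/
abbrev CP (m n : ℕ) := ℙ ℂ (V m n)

/-- the quotient topology on the projective space. -/
instance (m n : ℕ) : TopologicalSpace (CP m n) :=
  inferInstanceAs (TopologicalSpace (Quotient (projectivizationSetoid ℂ (V m n))))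

theorem vne1 {m n : ℕ} {v : V m n} (h1 : v.1 ≠ 0) : v ≠ 0 :=
  fun h => h1 (by rw [h]; rfl)

/-- the point [a : 0]. -/
def mkFst {m n : ℕ} (a : Fin (m + 1) → ℂ) (ha : a ≠ 0) : CP m n :=
  Projectivization.mk ℂ ((a, 0) : V m n) (vne1 ha)

/-- ℂP^m ⊆ ℂP^{m+n+1}, i.e. the set of points of the form [a : 0]. -/
def CPmSet (m n : ℕ) : Set (CP m n) :=
  {P | ∃ (a : Fin (m + 1) → ℂ) (ha : a ≠ 0), P = mkFst a ha}

/-- E_A := (A * ℂP^n) ∖ ℂP^n = {[a:b] : a ≠ 0 and [a:0] ∈ A}. -/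
def EA {m n : ℕ} (A : Set (CP m n)) : Set (CP m n) :=
  {P | ∃ (v : V m n) (h1 : v.1 ≠ 0),
    P = Projectivization.mk ℂ v (vne1 h1) ∧ mkFst v.1 h1 ∈ A}

/-- the affine chart U_i := {[a:b] : a_i ≠ 0}. -/
def Ui {m n : ℕ} (i : Fin (m + 1)) : Set (CP m n) :=
  {P | ∃ (v : V m n) (hv : v ≠ 0),
    P = Projectivization.mk ℂ v hv ∧ v.1 i ≠ 0}

namespace Stmt16Aux
open Topology


variable {m n : ℕ}

abbrev NZ (m n : ℕ) := {v : V m n // v ≠ 0}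

def pr (m n : ℕ) : NZ m n → CP m n := Projectivization.mk' ℂ

lemma pr_eq (v : V m n) (hv : v ≠ 0) : pr m n ⟨v, hv⟩ = Projectivization.mk ℂ v hv := rfl

lemma continuous_pr : Continuous (pr m n) := continuous_quotient_mk'

lemma surjective_pr : Function.Surjective (pr m n) := Quotient.mk''_surjective

/-- scaling by a unit, as a homeomorphism of the set of nonzero vectors -/
def scl (c : ℂˣ) : NZ m n ≃ₜ NZ m n where
  toFun v := ⟨c • v.1, (smul_ne_zero_iff_ne c).2 v.2⟩
  invFun v := ⟨c⁻¹ • v.1, (smul_ne_zero_iff_ne c⁻¹).2 v.2⟩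
  left_inv v := by ext : 1; simp
  right_inv v := by ext : 1; simp
  continuous_toFun := ((continuous_const_smul _).comp continuous_subtype_val).subtype_mk _
  continuous_invFun := ((continuous_const_smul _).comp continuous_subtype_val).subtype_mk _

lemma isOpenMap_pr : IsOpenMap (pr m n) := by
  intro S hS
  have key : pr m n ⁻¹' (pr m n '' S) = ⋃ c : ℂˣ, scl c '' S := by
    ext v
    simp only [Set.mem_preimage, Set.mem_image, Set.mem_iUnion]
    constructor
    · rintro ⟨w, hw, hmk⟩
      rw [show pr m n w = Projectivization.mk ℂ w.1 w.2 from rfl,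
        show pr m n v = Projectivization.mk ℂ v.1 v.2 from rfl,
        mk_eq_mk_iff] at hmk
      obtain ⟨c, hc⟩ := hmk
      refine ⟨c⁻¹, w, hw, ?_⟩
      ext : 1
      show (c⁻¹ : ℂˣ) • (w : V m n) = v
      rw [← hc, smul_smul, inv_mul_cancel, one_smul]
    · rintro ⟨c, w, hw, rfl⟩
      refine ⟨w, hw, ?_⟩
      rw [show pr m n w = Projectivization.mk ℂ w.1 w.2 from rfl,
        show pr m n (scl c w) = Projectivization.mk ℂ (scl c w).1 (scl c w).2 from rfl,
        mk_eq_mk_iff]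
      refine ⟨c⁻¹, ?_⟩
      show (c⁻¹ : ℂˣ) • ((c : ℂˣ) • (w : V m n)) = w
      rw [smul_smul, inv_mul_cancel, one_smul]
  have : IsOpen (pr m n ⁻¹' (pr m n '' S)) := by
    rw [key]
    exact isOpen_iUnion fun c => (scl c).isOpenMap S hS
  exact (isQuotientMap_quotient_mk').isOpen_preimage.mp this

lemma qmap (S : Set (CP m n)) : IsQuotientMap (S.restrictPreimage (pr m n)) :=
  ((isOpenMap_pr).restrictPreimage S).isQuotientMap
    (continuous_pr.restrictPreimage) (surjective_pr.restrictPreimage _)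



variable {m n : ℕ} {A : Set (CP m n)} {i : Fin (m + 1)}

lemma mem_Ui_mk {v : V m n} (hv : v ≠ 0) :
    Projectivization.mk ℂ v hv ∈ Ui i ↔ v.1 i ≠ 0 := by
  constructor
  · rintro ⟨w, hw, hmk, hwi⟩
    rw [mk_eq_mk_iff] at hmk
    obtain ⟨c, hc⟩ := hmk
    have : v.1 i = (c : ℂ) * w.1 i := by rw [← hc]; rfl
    rw [this]
    exact mul_ne_zero c.ne_zero hwi
  · intro h; exact ⟨v, hv, rfl, h⟩

lemma mkFst_smul (c : ℂˣ) {a : Fin (m + 1) → ℂ} (ha : a ≠ 0) (ha' : (c : ℂ) • a ≠ 0) :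
    (mkFst ((c : ℂ) • a) ha' : CP m n) = mkFst a ha := by
  unfold mkFst
  rw [mk_eq_mk_iff]
  refine ⟨c, ?_⟩
  show (c : ℂˣ) • ((a, 0) : V m n) = ((c : ℂ) • a, 0)
  ext x
  · rfl
  · show (c : ℂ) * 0 = 0; simp

lemma mkFst_eq_of_mk_eq {v w : V m n} (hv : v ≠ 0) (hw : w ≠ 0)
    (h : Projectivization.mk ℂ v hv = Projectivization.mk ℂ w hw)
    (h2 : w.1 ≠ 0) : ∃ h1 : v.1 ≠ 0, (mkFst v.1 h1 : CP m n) = mkFst w.1 h2 := by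
  rw [mk_eq_mk_iff] at h
  obtain ⟨c, hc⟩ := h
  have hv1 : v.1 = (c : ℂ) • w.1 := by rw [← hc]; rfl
  have h1 : v.1 ≠ 0 := by rw [hv1]; exact smul_ne_zero c.ne_zero h2
  refine ⟨h1, ?_⟩
  have := mkFst_smul (m := m) (n := n) c h2 (hv1 ▸ h1)
  calc mkFst v.1 h1 = mkFst ((c : ℂ) • w.1) (hv1 ▸ h1) := by congr 1
    _ = mkFst w.1 h2 := this

lemma mem_EA_mk {v : V m n} (hv : v ≠ 0) :
    Projectivization.mk ℂ v hv ∈ EA A ↔ ∃ h1 : v.1 ≠ 0, mkFst v.1 h1 ∈ A := by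
  constructor
  · rintro ⟨w, h1, hmk, hw⟩
    obtain ⟨hv1, he⟩ := mkFst_eq_of_mk_eq hv (vne1 h1) hmk h1
    exact ⟨hv1, he ▸ hw⟩
  · rintro ⟨h1, hmem⟩
    exact ⟨v, h1, rfl, hmem⟩

lemma snd_eq_zero {v : V m n} (hv : v ≠ 0)
    (h : Projectivization.mk ℂ v hv ∈ CPmSet m n) : v.2 = 0 := by
  obtain ⟨a, ha, hmk⟩ := h
  rw [mkFst, mk_eq_mk_iff] at hmk
  obtain ⟨c, hc⟩ := hmk
  have : v.2 = (c : ℂ) • (0 : Fin (n + 1) → ℂ) := by rw [← hc]; rfl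
  simpa using this

lemma EA_rep {P : CP m n} (h : P ∈ EA A) :
    ∃ h1 : P.rep.1 ≠ 0, mkFst P.rep.1 h1 ∈ A :=
  (mem_EA_mk P.rep_nonzero).1 (by rw [P.mk_rep]; exact h)

/-- the projection p_A -/
def pA (A : Set (CP m n)) : ↥(EA A) → CP m n :=
  fun e => mkFst e.1.rep.1 (EA_rep e.2).choose

lemma pA_mem (e : ↥(EA A)) : pA A e ∈ A := (EA_rep e.2).choose_spec

lemma pA_mk {v : V m n} (h1 : v.1 ≠ 0)
    (hE : Projectivization.mk ℂ v (vne1 h1) ∈ EA A) :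
    pA A ⟨Projectivization.mk ℂ v (vne1 h1), hE⟩ = mkFst v.1 h1 := by
  obtain ⟨h1', he⟩ := mkFst_eq_of_mk_eq
    (Projectivization.mk ℂ v (vne1 h1)).rep_nonzero (vne1 h1)
    (Projectivization.mk_rep _) h1
  exact he

lemma cont_pA : Continuous (pA A) := by
  rw [(qmap (EA A)).continuous_iff]
  have key : ∀ x : (pr m n) ⁻¹' (EA A),
      x.1.1.1 ≠ 0 :=
    fun x => ((mem_EA_mk x.1.2).1 x.2).choose
  have : (pA A ∘ (EA A).restrictPreimage (pr m n)) =
      fun x => pr m n ⟨(x.1.1.1, 0), vne1 (key x)⟩ := by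
    funext x
    show pA A ⟨pr m n x.1, x.2⟩ = _
    have h1 := key x
    have : pA A ⟨pr m n x.1, x.2⟩
        = pA A ⟨Projectivization.mk ℂ x.1.1 (vne1 h1), x.2⟩ := rfl
    rw [this, pA_mk h1 x.2]
    rfl
  rw [this]
  exact continuous_pr.comp <|
    ((continuous_subtype_val.comp continuous_subtype_val).fst.prodMk
      continuous_const).subtype_mk _



variable {m n : ℕ} {A : Set (CP m n)} {i : Fin (m + 1)}

lemma mkFst_eq_self {w : V m n} (hw : w ≠ 0) (h2 : w.2 = 0) (h1 : w.1 ≠ 0) :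
    (mkFst w.1 h1 : CP m n) = Projectivization.mk ℂ w hw := by
  rw [mkFst, mk_eq_mk_iff]
  exact ⟨1, by rw [one_smul]; exact Prod.ext rfl h2⟩

lemma EAUi_rep {P : CP m n} (h : P ∈ EA A ∩ Ui i) :
    ∃ h1 : P.rep.1 ≠ 0, (mkFst P.rep.1 h1 : CP m n) ∈ A ∩ Ui i ∧ P.rep.1 i ≠ 0 := by
  obtain ⟨h1, hmem⟩ := EA_rep h.1
  have hi : P.rep.1 i ≠ 0 :=
    (mem_Ui_mk P.rep_nonzero).1 (by rw [P.mk_rep]; exact h.2)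
  refine ⟨h1, ⟨hmem, ?_⟩, hi⟩
  show Projectivization.mk ℂ ((P.rep.1, 0) : V m n) (vne1 h1) ∈ Ui i
  exact (mem_Ui_mk (v := ((P.rep.1, 0) : V m n)) (vne1 h1)).2 hi

lemma A_rep (hA : A ⊆ CPmSet m n) {P : CP m n} (hP : P ∈ A ∩ Ui i) :
    P.rep.2 = 0 ∧ ∃ h1 : P.rep.1 ≠ 0, P.rep.1 i ≠ 0 ∧ P = mkFst P.rep.1 h1 := by
  have h2 : P.rep.2 = 0 :=
    snd_eq_zero P.rep_nonzero (by rw [P.mk_rep]; exact hA hP.1)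
  have h1 : P.rep.1 ≠ 0 := fun h0 => P.rep_nonzero (Prod.ext h0 h2)
  have hi : P.rep.1 i ≠ 0 :=
    (mem_Ui_mk P.rep_nonzero).1 (by rw [P.mk_rep]; exact hP.2)
  exact ⟨h2, h1, hi, ((mkFst_eq_self P.rep_nonzero h2 h1).trans P.mk_rep).symm⟩

/-- the forward map of the trivialization -/
def fwd (A : Set (CP m n)) (i : Fin (m + 1)) :
    ↥(EA A ∩ Ui i) → ↥(A ∩ Ui i) × (Fin (n + 1) → ℂ) :=
  fun e => (⟨mkFst e.1.rep.1 (EAUi_rep e.2).choose, (EAUi_rep e.2).choose_spec.1⟩,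
    (e.1.rep.1 i)⁻¹ • e.1.rep.2)

lemma fwd_mk {v : V m n} (h1 : v.1 ≠ 0)
    (hE : Projectivization.mk ℂ v (vne1 h1) ∈ EA A ∩ Ui i) :
    ((fwd A i ⟨Projectivization.mk ℂ v (vne1 h1), hE⟩).1 : CP m n) = mkFst v.1 h1 ∧
    (fwd A i ⟨Projectivization.mk ℂ v (vne1 h1), hE⟩).2 = (v.1 i)⁻¹ • v.2 := by
  set P := Projectivization.mk ℂ v (vne1 h1) with hP
  obtain ⟨c, hc⟩ := exists_smul_eq_mk_rep ℂ v (vne1 h1)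
  have hr1 : P.rep.1 = (c : ℂ) • v.1 := by rw [← hc]; rfl
  have hr2 : P.rep.2 = (c : ℂ) • v.2 := by rw [← hc]; rfl
  have hi : v.1 i ≠ 0 := (mem_Ui_mk (vne1 h1)).1 hE.2
  constructor
  · obtain ⟨h1', he⟩ := mkFst_eq_of_mk_eq P.rep_nonzero (vne1 h1) P.mk_rep h1
    exact he
  · show (P.rep.1 i)⁻¹ • P.rep.2 = (v.1 i)⁻¹ • v.2
    rw [hr1, hr2]
    show ((c : ℂ) * v.1 i)⁻¹ • ((c : ℂ) • v.2) = (v.1 i)⁻¹ • v.2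
    rw [smul_smul, mul_inv_rev, mul_assoc, inv_mul_cancel₀ c.ne_zero, mul_one]

lemma bwd_mem (hA : A ⊆ CPmSet m n) (x : ↥(A ∩ Ui i) × (Fin (n + 1) → ℂ)) :
    Projectivization.mk ℂ ((x.1.1.rep.1, x.1.1.rep.1 i • x.2) : V m n)
      (vne1 (A_rep hA x.1.2).2.choose) ∈ EA A ∩ Ui i := by
  obtain ⟨h2, h1, hi, hPe⟩ := A_rep hA x.1.2
  constructor
  · refine (mem_EA_mk _).2 ⟨h1, ?_⟩
    show mkFst x.1.1.rep.1 h1 ∈ A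
    rw [← hPe]; exact x.1.2.1
  · exact (mem_Ui_mk _).2 hi

/-- the backward map of the trivialization -/
def bwd (hA : A ⊆ CPmSet m n) (i : Fin (m + 1)) :
    ↥(A ∩ Ui i) × (Fin (n + 1) → ℂ) → ↥(EA A ∩ Ui i) :=
  fun x => ⟨Projectivization.mk ℂ ((x.1.1.rep.1, x.1.1.rep.1 i • x.2) : V m n)
    (vne1 (A_rep hA x.1.2).2.choose), bwd_mem hA x⟩

lemma bwd_mk (hA : A ⊆ CPmSet m n) {w : V m n} (hw : w ≠ 0)
    (hmem : Projectivization.mk ℂ w hw ∈ A ∩ Ui i) (b : Fin (n + 1) → ℂ)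
    (hw1 : w.1 ≠ 0) :
    ((bwd hA i (⟨Projectivization.mk ℂ w hw, hmem⟩, b)).1 : CP m n) =
      Projectivization.mk ℂ ((w.1, w.1 i • b) : V m n) (vne1 hw1) := by
  set P := Projectivization.mk ℂ w hw with hP
  obtain ⟨c, hc⟩ := exists_smul_eq_mk_rep ℂ w hw
  have hr1 : P.rep.1 = (c : ℂ) • w.1 := by rw [← hc]; rfl
  show Projectivization.mk ℂ ((P.rep.1, P.rep.1 i • b) : V m n) _ = _
  rw [mk_eq_mk_iff]
  refine ⟨c, Prod.ext ?_ ?_⟩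
  · exact hr1.symm
  · show (c : ℂ) • (w.1 i • b) = P.rep.1 i • b
    rw [hr1]
    show (c : ℂ) • (w.1 i • b) = ((c : ℂ) * w.1 i) • b
    rw [smul_smul]

lemma left_inv (hA : A ⊆ CPmSet m n) (e : ↥(EA A ∩ Ui i)) :
    bwd hA i (fwd A i e) = e := by
  obtain ⟨P, hP⟩ := e
  obtain ⟨h1, hmemAU, hi⟩ := EAUi_rep hP
  apply Subtype.ext
  have hmem' : Projectivization.mk ℂ ((P.rep.1, 0) : V m n) (vne1 h1) ∈ A ∩ Ui i :=
    (EAUi_rep hP).choose_spec.1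
  have step1 := bwd_mk (w := ((P.rep.1, 0) : V m n)) hA (vne1 h1)
    hmem' ((P.rep.1 i)⁻¹ • P.rep.2) h1
  refine step1.trans ?_
  conv_rhs => rw [show (⟨P, hP⟩ : ↥(EA A ∩ Ui i)).1 = P from rfl, ← P.mk_rep]
  rw [mk_eq_mk_iff]
  refine ⟨1, ?_⟩
  rw [one_smul]
  refine Prod.ext rfl ?_
  show P.rep.2 = P.rep.1 i • (P.rep.1 i)⁻¹ • P.rep.2
  rw [smul_smul, mul_inv_cancel₀ hi, one_smul]

lemma right_inv (hA : A ⊆ CPmSet m n) (x : ↥(A ∩ Ui i) × (Fin (n + 1) → ℂ)) :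
    fwd A i (bwd hA i x) = x := by
  obtain ⟨⟨P, hP⟩, b⟩ := x
  obtain ⟨h2, h1, hi, hPe⟩ := A_rep hA hP
  have ch := (A_rep hA hP).2.choose
  obtain ⟨f1, f2⟩ := fwd_mk (A := A) (i := i)
    (v := ((P.rep.1, P.rep.1 i • b) : V m n)) ch (bwd_mem hA (⟨P, hP⟩, b))
  refine Prod.ext (Subtype.ext ?_) ?_
  · exact f1.trans hPe.symm
  · refine f2.trans ?_
    show (P.rep.1 i)⁻¹ • (P.rep.1 i • b) = b
    rw [smul_smul, inv_mul_cancel₀ hi, one_smul]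



variable {m n : ℕ} {A : Set (CP m n)} {i : Fin (m + 1)}

lemma cont_fwd : Continuous (fwd A i) := by
  rw [(qmap (EA A ∩ Ui i)).continuous_iff]
  have h1 : ∀ x : (pr m n) ⁻¹' (EA A ∩ Ui i), x.1.1.1 ≠ 0 :=
    fun x => ((mem_EA_mk x.1.2).1 x.2.1).choose
  have hi : ∀ x : (pr m n) ⁻¹' (EA A ∩ Ui i), x.1.1.1 i ≠ 0 :=
    fun x => (mem_Ui_mk x.1.2).1 x.2.2
  have hmemb : ∀ x : (pr m n) ⁻¹' (EA A ∩ Ui i),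
      pr m n ⟨((x.1.1.1, 0) : V m n), vne1 (h1 x)⟩ ∈ A ∩ Ui i := by
    intro x
    constructor
    · show mkFst x.1.1.1 (h1 x) ∈ A
      exact ((mem_EA_mk x.1.2).1 x.2.1).choose_spec
    · exact (mem_Ui_mk (v := ((x.1.1.1, 0) : V m n)) (vne1 (h1 x))).2 (hi x)
  have key : (fwd A i ∘ (EA A ∩ Ui i).restrictPreimage (pr m n)) =
      fun x => (⟨pr m n ⟨((x.1.1.1, 0) : V m n), vne1 (h1 x)⟩, hmemb x⟩,
        (x.1.1.1 i)⁻¹ • x.1.1.2) := by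
    funext x
    have hE : Projectivization.mk ℂ x.1.1 (vne1 (h1 x)) ∈ EA A ∩ Ui i := x.2
    obtain ⟨f1, f2⟩ := fwd_mk (A := A) (i := i) (h1 x) hE
    exact Prod.ext (Subtype.ext f1) f2
  rw [key]
  have hv : Continuous fun x : (pr m n) ⁻¹' (EA A ∩ Ui i) => (x.1.1 : V m n) :=
    continuous_subtype_val.comp continuous_subtype_val
  refine Continuous.prodMk ?_ ?_
  · exact (continuous_pr.comp ((hv.fst.prodMk continuous_const).subtype_mk _)).subtype_mk _
  · exact (((continuous_apply i).comp hv.fst).inv₀ hi).smul hv.snd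

lemma cont_bwd (hA : A ⊆ CPmSet m n) : Continuous (bwd hA i) := by
  have Q : IsQuotientMap (Prod.map ((A ∩ Ui i).restrictPreimage (pr m n))
      (id : (Fin (n + 1) → ℂ) → (Fin (n + 1) → ℂ))) :=
    ((isOpenMap_pr.restrictPreimage _).prodMap IsOpenMap.id).isQuotientMap
      (continuous_pr.restrictPreimage.prodMap continuous_id)
      ((surjective_pr.restrictPreimage _).prodMap Function.surjective_id)
  rw [Q.continuous_iff]
  set D := (pr m n) ⁻¹' (A ∩ Ui i) with hD
  have h2 : ∀ x : D, (x.1.1 : V m n).2 = 0 :=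
    fun x => snd_eq_zero x.1.2 (hA x.2.1)
  have h1 : ∀ x : D, (x.1.1 : V m n).1 ≠ 0 :=
    fun x => fun h0 => x.1.2 (Prod.ext h0 (h2 x))
  have hi : ∀ x : D, (x.1.1 : V m n).1 i ≠ 0 :=
    fun x => (mem_Ui_mk x.1.2).1 x.2.2
  have hmemb : ∀ z : D × (Fin (n + 1) → ℂ),
      pr m n ⟨((z.1.1.1.1, z.1.1.1.1 i • z.2) : V m n), vne1 (h1 z.1)⟩ ∈ EA A ∩ Ui i := by
    intro z
    constructor
    · refine (mem_EA_mk _).2 ⟨h1 z.1, ?_⟩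
      show mkFst z.1.1.1.1 (h1 z.1) ∈ A
      rw [mkFst_eq_self z.1.1.2 (h2 z.1) (h1 z.1)]
      exact z.1.2.1
    · exact (mem_Ui_mk (v := ((z.1.1.1.1, z.1.1.1.1 i • z.2) : V m n))
        (vne1 (h1 z.1))).2 (hi z.1)
  have key : (bwd hA i ∘ Prod.map ((A ∩ Ui i).restrictPreimage (pr m n)) id) =
      fun z => ⟨pr m n ⟨((z.1.1.1.1, z.1.1.1.1 i • z.2) : V m n), vne1 (h1 z.1)⟩,
        hmemb z⟩ := by
    funext z
    apply Subtype.ext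
    have hmem : Projectivization.mk ℂ (z.1.1.1 : V m n) z.1.1.2 ∈ A ∩ Ui i := z.1.2
    exact bwd_mk hA z.1.1.2 hmem z.2 (h1 z.1)
  rw [key]
  have hv : Continuous fun z : D × (Fin (n + 1) → ℂ) => (z.1.1.1 : V m n) :=
    continuous_subtype_val.comp (continuous_subtype_val.comp continuous_fst)
  refine Continuous.subtype_mk (continuous_pr.comp (Continuous.subtype_mk ?_ _)) _
  exact hv.fst.prodMk (((continuous_apply i).comp hv.fst).smul continuous_snd)

/-- the trivialization -/
def phi (hA : A ⊆ CPmSet m n) (i : Fin (m + 1)) :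
    ↥(EA A ∩ Ui i) ≃ₜ (↥(A ∩ Ui i) × (Fin (n + 1) → ℂ)) where
  toFun := fwd A i
  invFun := bwd hA i
  left_inv := left_inv hA
  right_inv := right_inv hA
  continuous_toFun := cont_fwd
  continuous_invFun := cont_bwd hA


end Stmt16Aux

open Stmt16Aux in
theorem stmt16 (m n : ℕ) (A : Set (CP m n)) (hA : A ⊆ CPmSet m n) :
    ∃ p : ↥(EA A) → CP m n,
      -- p_A is well defined: p_A([a:b]) = [a:0]
      (∀ (v : V m n) (h1 : v.1 ≠ 0) (hmem : mkFst v.1 h1 ∈ A)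
          (hE : Projectivization.mk ℂ v (vne1 h1) ∈ EA A),
        p ⟨Projectivization.mk ℂ v (vne1 h1), hE⟩ = mkFst v.1 h1) ∧
      -- it takes values in {[a:0] : [a:0] ∈ A}
      (∀ e : ↥(EA A), p e ∈ A) ∧
      -- p_A is continuous
      Continuous p ∧
      ∀ i : Fin (m + 1),
        -- p_A⁻¹({[a:0] ∈ A : a_i ≠ 0}) = E_A ∩ U_i
        p ⁻¹' (A ∩ Ui i) = Subtype.val ⁻¹' (Ui i) ∧
        -- the trivialization over U_i
        ∃ φ : ↥(EA A ∩ Ui i) ≃ₜ (↥(A ∩ Ui i) × (Fin (n + 1) → ℂ)),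
          (∀ (v : V m n) (h1 : v.1 ≠ 0) (hi : v.1 i ≠ 0)
              (hE : Projectivization.mk ℂ v (vne1 h1) ∈ EA A ∩ Ui i),
            ((φ ⟨Projectivization.mk ℂ v (vne1 h1), hE⟩).1 : CP m n)
                = mkFst v.1 h1 ∧
            (φ ⟨Projectivization.mk ℂ v (vne1 h1), hE⟩).2 = (v.1 i)⁻¹ • v.2) ∧
          (∀ e : ↥(EA A ∩ Ui i), ((φ e).1 : CP m n) = p ⟨e.1, e.2.1⟩) := by
  refine ⟨pA A, fun v h1 _ hE => pA_mk h1 hE, pA_mem, cont_pA, fun i => ⟨?_, phi hA i,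
    fun v h1 hi hE => fwd_mk h1 hE, fun e => rfl⟩⟩
  ext e
  obtain ⟨h1, hmem⟩ := EA_rep e.2
  simp only [Set.mem_preimage]
  constructor
  · intro h
    have hUi : Projectivization.mk ℂ ((e.1.rep.1, 0) : V m n)
        (vne1 (EA_rep e.2).choose) ∈ Ui i := h.2
    have hi : e.1.rep.1 i ≠ 0 :=
      (mem_Ui_mk (v := ((e.1.rep.1, 0) : V m n)) (vne1 (EA_rep e.2).choose)).1 hUi
    rw [← e.1.mk_rep]
    exact (mem_Ui_mk _).2 hi
  · intro h
    have hi : e.1.rep.1 i ≠ 0 :=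
      (mem_Ui_mk e.1.rep_nonzero).1 (by rw [e.1.mk_rep]; exact h)
    refine ⟨pA_mem e, ?_⟩
    show mkFst e.1.rep.1 (EA_rep e.2).choose ∈ Ui i
    exact (mem_Ui_mk (v := ((e.1.rep.1, 0) : V m n)) (vne1 (EA_rep e.2).choose)).2 hi
end
end
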